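/- arXiv:2311.16665 — 12 statements merged into one kernel-verified Lean document; each statement's English description precedes it below -/
import Mathlib

section
/- A graph G containing at least two distinct cycles has at most two vertices v such that the vertex-deleted subgraph G − v is acyclic. -/
open SimpleGraph

/-- The vertex-deleted subgraph `G - v`: the induced subgraph on the remaining vertices. -/
def deleteVert {V : Type*} (G : SimpleGraph V) (v : V) : SimpleGraph {w : V // w ≠ v} :=
  G.induce {w : V | w ≠ v}

/-- `G` contains a cycle. -/
def HasCycleG {V : Type*} (G : SimpleGraph V) : Prop :=
  ∃ (u : V) (c : G.Walk u u), c.IsCycle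

/-- `G` contains at least two distinct cycles (distinct as subgraphs,
i.e. with different edge sets). -/
def TwoCycles {V : Type*} (G : SimpleGraph V) : Prop :=
  ∃ (u v : V) (c : G.Walk u u) (c' : G.Walk v v),
    c.IsCycle ∧ c'.IsCycle ∧ ¬ (∀ e, e ∈ c.edges ↔ e ∈ c'.edges)

/-- `G` contains exactly one cycle: it has a cycle, and any two cycles are equal
as subgraphs (have the same edge set). -/
def Unicyclic {V : Type*} (G : SimpleGraph V) : Prop :=
  HasCycleG G ∧ ∀ (u v : V) (c : G.Walk u u) (c' : G.Walk v v),
    c.IsCycle → c'.IsCycle → ∀ e, e ∈ c.edges ↔ e ∈ c'.edges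

/-- `F` and `G` have at least `k` common cards, i.e. the multiset intersection of their
decks has size at least `k`: there are `k` distinct vertices of `F` and `k` distinct
vertices of `G` whose corresponding vertex-deleted subgraphs are pairwise isomorphic. -/
def CommonCards {V W : Type*} (F : SimpleGraph V) (G : SimpleGraph W) (k : ℕ) : Prop :=
  ∃ (f : Fin k ↪ V) (g : Fin k ↪ W),
    ∀ i, Nonempty (deleteVert F (f i) ≃g deleteVert G (g i))

/-! If `G - v₁`, `G - v₂`, `G - v₃` are acyclic for distinct `v₁, v₂, v₃`, every cycle passes
through all three vertices and so splits into a `v₁v₂`-path avoiding `v₃`, a `v₂v₃`-path avoiding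
`v₁` and a `v₃v₁`-path avoiding `v₂`. Each of these lies in an acyclic graph `G - vᵢ`, where paths
are unique, so all cycles of `G` have the same edges. -/

namespace SimpleGraph.Walk

variable {V : Type*} {G : SimpleGraph V}

lemma IsCycle.exists_mem_support_notMem_of_isAcyclic_induce {s : Set V}
    (hs : (G.induce s).IsAcyclic) {u : V} {c : G.Walk u u} (hc : c.IsCycle) :
    ∃ x ∈ c.support, x ∉ s := by
  by_contra! h
  exact hs _ (IsCycle.of_map (f := (Embedding.induce s).toHom) (by rwa [map_induce]) :
    (c.induce s h).IsCycle)

lemma IsCycle.mem_support_of_isAcyclic_deleteVert {v : V} (hv : (deleteVert G v).IsAcyclic)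
    {u : V} {c : G.Walk u u} (hc : c.IsCycle) : v ∈ c.support := by
  obtain ⟨x, hx, hxv⟩ := hc.exists_mem_support_notMem_of_isAcyclic_induce hv
  exact of_not_not hxv ▸ hx

lemma IsPath.eq_of_isAcyclic_induce {s : Set V} (hs : (G.induce s).IsAcyclic) {a b : V}
    {p q : G.Walk a b} (hp : p.IsPath) (hq : q.IsPath) (hps : ∀ x ∈ p.support, x ∈ s)
    (hqs : ∀ x ∈ q.support, x ∈ s) : p = q := by
  have key := (hs.subsingleton_path _ _).elim
    ⟨p.induce s hps, IsPath.of_map (f := (Embedding.induce s).toHom) (by rwa [map_induce])⟩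
    ⟨q.induce s hqs, IsPath.of_map (f := (Embedding.induce s).toHom) (by rwa [map_induce])⟩
  simpa using congrArg (fun P => P.val.map (Embedding.induce s).toHom) key

lemma IsCycle.eq_or_eq_of_mem_support_append {u v x : V} {A : G.Walk u v} {B : G.Walk v u}
    (hc : (A.append B).IsCycle) (hxA : x ∈ A.support) (hxB : x ∈ B.support) :
    x = u ∨ x = v := by
  by_contra! hx
  have hnd := hc.support_nodup
  rw [tail_support_append] at hnd
  exact List.disjoint_of_nodup_append hnd (((mem_support_iff A).1 hxA).resolve_left hx.1)
    (((mem_support_iff B).1 hxB).resolve_left hx.2)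

variable [DecidableEq V]

lemma IsCycle.exists_arcs_of_mem_support_right {v₁ v₂ v₃ : V} {A : G.Walk v₁ v₂}
    {B : G.Walk v₂ v₁} (hc : (A.append B).IsCycle) (h₁₂ : v₁ ≠ v₂) (h₃ : v₃ ∈ B.support)
    (h₃₁ : v₃ ≠ v₁) (h₃₂ : v₃ ≠ v₂) :
    ∃ (p : G.Walk v₁ v₂) (q : G.Walk v₂ v₃) (r : G.Walk v₃ v₁),
      p.IsPath ∧ q.IsPath ∧ r.IsPath ∧ v₃ ∉ p.support ∧ v₁ ∉ q.support ∧ v₂ ∉ r.support ∧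
      (A.append B).edges.Perm (p.edges ++ q.edges ++ r.edges) := by
  have hB : B.IsPath := hc.isPath_of_append_right (not_nil_of_ne h₁₂)
  have hB' : ((B.takeUntil v₃ h₃).append (B.dropUntil v₃ h₃)).IsPath := by rwa [take_spec]
  refine ⟨A, B.takeUntil v₃ h₃, B.dropUntil v₃ h₃,
    hc.isPath_of_append_left (not_nil_of_ne h₁₂.symm), hB.takeUntil h₃, hB.dropUntil h₃,
    fun h => ?_, fun h => ?_, fun h => ?_, ?_⟩
  · exact (hc.eq_or_eq_of_mem_support_append h h₃).elim h₃₁ h₃₂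
  · exact hB'.ne_of_mem_support_of_append h₃₁.symm h (end_mem_support _) rfl
  · exact hB'.ne_of_mem_support_of_append h₃₂.symm (start_mem_support _) h rfl
  · refine .of_eq ?_
    conv_lhs => rw [← take_spec B h₃]
    simp only [edges_append, List.append_assoc]

lemma IsCycle.exists_arcs {u v₁ v₂ v₃ : V} {c : G.Walk u u} (hc : c.IsCycle)
    (h₁ : v₁ ∈ c.support) (h₂ : v₂ ∈ c.support) (h₃ : v₃ ∈ c.support)
    (h₁₂ : v₁ ≠ v₂) (h₁₃ : v₁ ≠ v₃) (h₂₃ : v₂ ≠ v₃) :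
    ∃ (p : G.Walk v₁ v₂) (q : G.Walk v₂ v₃) (r : G.Walk v₃ v₁),
      p.IsPath ∧ q.IsPath ∧ r.IsPath ∧ v₃ ∉ p.support ∧ v₁ ∉ q.support ∧ v₂ ∉ r.support ∧
      c.edges.Perm (p.edges ++ q.edges ++ r.edges) := by
  obtain ⟨A, B, hAB, hedges, h₃'⟩ : ∃ (A : G.Walk v₁ v₂) (B : G.Walk v₂ v₁),
      (A.append B).IsCycle ∧ c.edges.Perm (A.append B).edges ∧ v₃ ∈ (A.append B).support := by
    have h₂' := (mem_support_rotate_iff c v₁ h₁).2 h₂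
    refine ⟨(c.rotate v₁ h₁).takeUntil v₂ h₂', (c.rotate v₁ h₁).dropUntil v₂ h₂', ?_⟩
    rw [take_spec]
    exact ⟨hc.rotate h₁, (rotate_edges c v₁ h₁).perm.symm, (mem_support_rotate_iff c v₁ h₁).2 h₃⟩
  rcases (mem_support_append_iff A B).1 h₃' with h₃A | h₃B
  · -- the reversed cycle runs through `B.reverse` first, so `v₃` lies on its second arc
    have hrev : (B.reverse.append A.reverse).IsCycle := by
      rwa [← reverse_append, isCycle_reverse]
    obtain ⟨p, q, r, hp, hq, hr, hp₃, hq₁, hr₂, hpqr⟩ := hrev.exists_arcs_of_mem_support_right h₁₂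
      (by rwa [support_reverse, List.mem_reverse]) h₁₃.symm h₂₃.symm
    refine ⟨p, q, r, hp, hq, hr, hp₃, hq₁, hr₂, hedges.trans ((List.reverse_perm _).symm.trans ?_)⟩
    rwa [← edges_reverse, reverse_append]
  · obtain ⟨p, q, r, hp, hq, hr, hp₃, hq₁, hr₂, hpqr⟩ :=
      hAB.exists_arcs_of_mem_support_right h₁₂ h₃B h₁₃.symm h₂₃.symm
    exact ⟨p, q, r, hp, hq, hr, hp₃, hq₁, hr₂, hedges.trans hpqr⟩

lemma IsCycle.edges_perm_of_isAcyclic_deleteVert {v₁ v₂ v₃ : V}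
    (h₁₂ : v₁ ≠ v₂) (h₁₃ : v₁ ≠ v₃) (h₂₃ : v₂ ≠ v₃) (h₁ : (deleteVert G v₁).IsAcyclic)
    (h₂ : (deleteVert G v₂).IsAcyclic) (h₃ : (deleteVert G v₃).IsAcyclic)
    {u u' : V} {c : G.Walk u u} {c' : G.Walk u' u'} (hc : c.IsCycle) (hc' : c'.IsCycle) :
    c.edges.Perm c'.edges := by
  obtain ⟨p, q, r, hp, hq, hr, hp₃, hq₁, hr₂, hc_edges⟩ := hc.exists_arcs
    (hc.mem_support_of_isAcyclic_deleteVert h₁) (hc.mem_support_of_isAcyclic_deleteVert h₂)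
    (hc.mem_support_of_isAcyclic_deleteVert h₃) h₁₂ h₁₃ h₂₃
  obtain ⟨p', q', r', hp', hq', hr', hp₃', hq₁', hr₂', hc'_edges⟩ := hc'.exists_arcs
    (hc'.mem_support_of_isAcyclic_deleteVert h₁) (hc'.mem_support_of_isAcyclic_deleteVert h₂)
    (hc'.mem_support_of_isAcyclic_deleteVert h₃) h₁₂ h₁₃ h₂₃
  obtain rfl : p = p' := hp.eq_of_isAcyclic_induce h₃ hp'
    (fun _ hx => ne_of_mem_of_not_mem hx hp₃) (fun _ hx => ne_of_mem_of_not_mem hx hp₃')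
  obtain rfl : q = q' := hq.eq_of_isAcyclic_induce h₁ hq'
    (fun _ hx => ne_of_mem_of_not_mem hx hq₁) (fun _ hx => ne_of_mem_of_not_mem hx hq₁')
  obtain rfl : r = r' := hr.eq_of_isAcyclic_induce h₂ hr'
    (fun _ hx => ne_of_mem_of_not_mem hx hr₂) (fun _ hx => ne_of_mem_of_not_mem hx hr₂')
  exact hc_edges.trans hc'_edges.symm

end SimpleGraph.Walk

theorem stmt0_general {V : Type*} (G : SimpleGraph V) (hG : TwoCycles G) :
    {v : V | (deleteVert G v).IsAcyclic}.ncard ≤ 2 := by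
  classical
  by_contra! hcard
  obtain ⟨v₁, h₁, v₂, h₂, v₃, h₃, h₁₂, h₁₃, h₂₃⟩ :=
    (Set.two_lt_ncard (Set.finite_of_ncard_pos (by omega))).1 hcard
  obtain ⟨u, u', c, c', hc, hc', hne⟩ := hG
  exact hne fun e =>
    (hc.edges_perm_of_isAcyclic_deleteVert h₁₂ h₁₃ h₂₃ h₁ h₂ h₃ hc').mem_iff

/-- A graph `G` containing at least two distinct cycles has at most two
vertices `v` such that `G - v` is acyclic. -/
theorem stmt0 {V : Type*} [Fintype V] (G : SimpleGraph V) (hG : TwoCycles G) :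
    {v : V | (deleteVert G v).IsAcyclic}.ncard ≤ 2 :=
  stmt0_general G hG
end

section
/- If a forest F and a graph G containing at least two distinct cycles are both on n vertices, then they have at most two common cards, i.e., the multiset intersection of their decks has size at most 2. -/
open SimpleGraph

section Aux
variable {V : Type*} {G : SimpleGraph V}


variable {V : Type*} {G : SimpleGraph V}

/-- Hom from induced subgraph back to the big graph. -/
def inducedHom (G : SimpleGraph V) (s : Set V) : G.induce s →g G where
  toFun := Subtype.val
  map_rel' := fun h => h

lemma inducedHom_injective (s : Set V) :
    Function.Injective (inducedHom G s) := Subtype.val_injective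

/-- Lift a walk whose support lies in `s` to the induced subgraph. -/
def liftWalk {s : Set V} :
    ∀ {a b : V} (p : G.Walk a b) (ha : a ∈ s) (hb : b ∈ s)
      (_ : ∀ v ∈ p.support, v ∈ s), (G.induce s).Walk ⟨a, ha⟩ ⟨b, hb⟩
  | _, _, Walk.nil, _, _, _ => Walk.nil
  | _, _, Walk.cons adj p, ha, hb, h =>
      Walk.cons (by exact adj)
        (liftWalk p (h _ (by simp)) hb (fun v hv => h v (by simp [hv])))

lemma liftWalk_map {s : Set V} {a b : V} (p : G.Walk a b) (ha : a ∈ s) (hb : b ∈ s)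
    (h : ∀ v ∈ p.support, v ∈ s) :
    (liftWalk p ha hb h).map (inducedHom G s) = p := by
  induction p with
  | nil => rfl
  | cons adj p ih => simp only [liftWalk]; exact congrArg (Walk.cons adj) (ih _ _ _)

lemma induce_no_cycle {s : Set V} (h : (G.induce s).IsAcyclic) {u : V} {d : G.Walk u u}
    (hd : d.IsCycle) (hsup : ∀ v ∈ d.support, v ∈ s) : False := by
  have hu : u ∈ s := hsup u d.start_mem_support
  have hmap := liftWalk_map d hu hu hsup
  have : (liftWalk d hu hu hsup).IsCycle := by
    rw [← Walk.map_isCycle_iff_of_injective (p := liftWalk d hu hu hsup)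
      (inducedHom_injective s), hmap]
    exact hd
  exact h _ this

lemma induce_acyclic (h : G.IsAcyclic) (s : Set V) : (G.induce s).IsAcyclic := by
  intro v c hc
  exact h _ (hc.map (inducedHom_injective s))

lemma acyclic_of_iso {W : Type*} {H : SimpleGraph W} (e : G ≃g H) (h : H.IsAcyclic) :
    G.IsAcyclic := by
  intro v c hc
  exact h _ (hc.map (f := e.toEmbedding.toHom) e.toEmbedding.injective)


lemma edges_eq_of_mem : ∀ {a b : V} (p : G.Walk a b), p.IsPath → s(a, b) ∈ p.edges →
    p.edges = [s(a, b)] := by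
  intro a b p
  induction p with
  | nil => simp
  | @cons a w b adj p ih =>
    intro hp he
    rw [Walk.edges_cons, List.mem_cons] at he
    rcases he with he | he
    · have hab : b = w := by
        rw [Sym2.eq_iff] at he
        rcases he with ⟨-, h⟩ | ⟨h1, h2⟩
        · exact h
        · exact absurd h1 adj.ne
      subst hab
      have hnil : p.Nil := by
        cases p with
        | nil => exact Walk.Nil.nil
        | cons adj' q =>
          exfalso
          have hnd := (hp.of_cons).support_nodup
          rw [Walk.support_cons] at hnd
          exact (List.nodup_cons.mp hnd).1 q.end_mem_support
      rw [hnil.eq_nil]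
      simp
    · exfalso
      have : a ∈ p.support := Walk.fst_mem_support_of_mem_edges p he
      have hna : a ∉ p.support := by
        have := hp.support_nodup
        rw [Walk.support_cons] at this
        exact (List.nodup_cons.mp this).1
      exact hna this

lemma first_hit {s : Set V} : ∀ {a b : V} (W : G.Walk a b), W.IsPath → b ∈ s → a ∉ s →
    ∃ (c : V) (_ : c ∈ s) (P : G.Walk a c), P.IsPath ∧
      (∀ v ∈ P.support, v ≠ c → v ∉ s) ∧
      (∀ e ∈ P.edges, e ∈ W.edges) ∧ (∀ v ∈ P.support, v ∈ W.support) ∧ ¬ P.Nil := by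
  intro a b W
  induction W with
  | nil => intro _ hb ha; exact absurd hb ha
  | @cons a u b adj W ih =>
    intro hW hb ha
    by_cases hu : u ∈ s
    · refine ⟨u, hu, Walk.cons adj Walk.nil, ?_, ?_, ?_, ?_, ?_⟩
      · simp [Walk.isPath_def, adj.ne]
      · intro v hv hvc
        simp only [Walk.support_cons, Walk.support_nil, List.mem_cons, List.mem_singleton] at hv
        rcases hv with rfl | hv2
        · exact ha
        · rcases hv2 with rfl | hv3
          · exact absurd rfl hvc
          · simp at hv3
      · intro e he; simp at he; simp [he]
      · intro v hv; simp at hv; rcases hv with rfl | rfl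
        · simp
        · simp
      · simp
    · obtain ⟨c, hc, P, hP, hint, hPe, hPs, hPn⟩ := ih hW.of_cons hb hu
      have haP : a ∉ P.support := fun h =>
        ((Walk.cons_isPath_iff adj W).mp hW).2 (hPs a h)
      refine ⟨c, hc, Walk.cons adj P, ?_, ?_, ?_, ?_, ?_⟩
      · exact (Walk.cons_isPath_iff adj P).mpr ⟨hP, haP⟩
      · intro v hv hvc
        rw [Walk.support_cons, List.mem_cons] at hv
        rcases hv with rfl | hv
        · exact ha
        · exact hint v hv hvc
      · intro e he
        rw [Walk.edges_cons, List.mem_cons] at he ⊢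
        rcases he with rfl | he
        · exact Or.inl rfl
        · exact Or.inr (hPe e he)
      · intro v hv
        rw [Walk.support_cons, List.mem_cons] at hv ⊢
        rcases hv with rfl | hv
        · exact Or.inl rfl
        · exact Or.inr (hPs v hv)
      · simp

/-- Extract from a path `W` with both ends in `S` a segment whose ends are in `S`,
whose interior avoids `S`, and which contains an edge outside `E`. -/
lemma seg {S : Set V} {E : Set (Sym2 V)} (hE : ∀ x y : V, s(x, y) ∈ E → x ∈ S) :
    ∀ {a b : V} (W : G.Walk a b), W.IsPath → a ∈ S → b ∈ S → (∃ e ∈ W.edges, e ∉ E) →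
    ∃ (p q : V) (P : G.Walk p q), p ≠ q ∧ P.IsPath ∧ p ∈ S ∧ q ∈ S ∧
      (∀ v ∈ P.support, v ≠ p → v ≠ q → v ∉ S) ∧ (∃ e ∈ P.edges, e ∉ E) := by
  intro a b W
  induction W with
  | nil => rintro _ _ _ ⟨e, he, -⟩; simp at he
  | @cons a u b adj W ih =>
    intro hW ha hb hbad
    by_cases hu : u ∈ S
    · by_cases hae : s(a, u) ∈ E
      · obtain ⟨e, he, heE⟩ := hbad
        rw [Walk.edges_cons, List.mem_cons] at he
        rcases he with rfl | he
        · exact absurd hae heE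
        · exact ih hW.of_cons hu hb ⟨e, he, heE⟩
      · refine ⟨a, u, Walk.cons adj Walk.nil, adj.ne, ?_, ha, hu, ?_, ⟨s(a, u), by simp, hae⟩⟩
        · simp [Walk.isPath_def, adj.ne]
        · intro v hv hva hvu
          simp only [Walk.support_cons, Walk.support_nil, List.mem_cons,
            List.mem_singleton] at hv
          rcases hv with rfl | hv2
          · exact absurd rfl hva
          · rcases hv2 with rfl | hv3
            · exact absurd rfl hvu
            · simp at hv3
    · have hae : s(a, u) ∉ E := fun h => hu (hE u a (by rwa [Sym2.eq_swap] at h))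
      obtain ⟨c, hc, P, hP, hint, hPe, hPs, hPn⟩ := first_hit W hW.of_cons hb hu
      have haP : a ∉ P.support := fun h =>
        ((Walk.cons_isPath_iff adj W).mp hW).2 (hPs a h)
      have hac : a ≠ c := fun h => haP (h ▸ P.end_mem_support)
      refine ⟨a, c, Walk.cons adj P, hac, (Walk.cons_isPath_iff adj P).mpr ⟨hP, haP⟩,
        ha, hc, ?_, ⟨s(a, u), by simp, hae⟩⟩
      intro v hv hva hvc
      rw [Walk.support_cons, List.mem_cons] at hv
      rcases hv with rfl | hv
      · exact absurd rfl hva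
      · exact hint v hv hvc

lemma end_mem_tail {u : V} (p : G.Walk u u) (hp : ¬ p.Nil) : u ∈ p.support.tail := by
  cases p with
  | nil => exact absurd Walk.Nil.nil hp
  | cons adj q => simpa using q.end_mem_support

lemma mem_support_rotate [DecidableEq V] {u a : V} (c : G.Walk u u) (hnil : ¬ c.Nil) (h : a ∈ c.support)
    (v : V) : v ∈ (c.rotate a h).support ↔ v ∈ c.support := by
  have hr : v ∈ (c.rotate a h).support.tail ↔ v ∈ c.support.tail :=
    (Walk.support_rotate c a h).mem_iff
  constructor
  · intro hv
    rw [Walk.support_eq_cons (c.rotate a h), List.mem_cons] at hv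
    rcases hv with rfl | hv
    · exact h
    · exact List.mem_of_mem_tail (hr.mp hv)
  · intro hv
    rw [Walk.support_eq_cons c, List.mem_cons] at hv
    have hv' : v ∈ c.support.tail := by
      rcases hv with rfl | hv
      · exact end_mem_tail c hnil
      · exact hv
    exact List.mem_of_mem_tail (hr.mpr hv')

lemma pigeon {x y z a b : V} (hxy : x ≠ y) (hxz : x ≠ z) (hyz : y ≠ z)
    (hx : x = a ∨ x = b) (hy : y = a ∨ y = b) (hz : z = a ∨ z = b) : False := by
  rcases hx with rfl | rfl <;> rcases hy with rfl | rfl <;> rcases hz with rfl | rfl <;> simp_all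

lemma main_lemma [DecidableEq V] {u v : V} {c : G.Walk u u} {c' : G.Walk v v} (hc : c.IsCycle)
    (hc' : c'.IsCycle) {x y z : V} (hxy : x ≠ y) (hxz : x ≠ z) (hyz : y ≠ z)
    (hall : ∀ (w : V) (d : G.Walk w w), d.IsCycle →
      x ∈ d.support ∧ y ∈ d.support ∧ z ∈ d.support)
    {e₀ : Sym2 V} (he₀' : e₀ ∈ c'.edges) (he₀ : e₀ ∉ c.edges) : False := by
  classical
  set S : Set V := {w | w ∈ c.support} with hSdef
  set E : Set (Sym2 V) := {e | e ∈ c.edges} with hEdef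
  have hE : ∀ p q : V, s(p, q) ∈ E → p ∈ S := fun p q hpq =>
    c.fst_mem_support_of_mem_edges hpq
  have hxS : x ∈ S := (hall u c hc).1
  have hyS : y ∈ S := (hall u c hc).2.1
  have hzS : z ∈ S := (hall u c hc).2.2
  have hxc' : x ∈ c'.support := (hall v c' hc').1
  have hrot : (c'.rotate x hxc').IsCycle := hc'.rotate hxc'
  have he₀rot : e₀ ∈ (c'.rotate x hxc').edges := (Walk.rotate_edges c' x hxc').mem_iff.mpr he₀'
  have segex : ∃ (p q : V) (P : G.Walk p q), p ≠ q ∧ P.IsPath ∧ p ∈ S ∧ q ∈ S ∧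
      (∀ w ∈ P.support, w ≠ p → w ≠ q → w ∉ S) ∧ (∃ e ∈ P.edges, e ∉ E) := by
    generalize hgen : c'.rotate x hxc' = c2 at hrot he₀rot
    cases c2 with
    | nil => exact absurd hrot Walk.IsCycle.not_of_nil
    | @cons _ h2 _ adj R =>
      obtain ⟨hR, hRe⟩ := (Walk.cons_isCycle_iff R adj).mp hrot
      by_cases hh : h2 ∈ S
      · by_cases hxe : s(x, h2) ∈ E
        · have heR : e₀ ∈ R.edges := by
            rw [Walk.edges_cons, List.mem_cons] at he₀rot
            rcases he₀rot with rfl | h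
            · exact absurd hxe he₀
            · exact h
          exact seg hE R hR hh hxS ⟨e₀, heR, he₀⟩
        · refine ⟨x, h2, Walk.cons adj Walk.nil, adj.ne, ?_, hxS, hh, ?_,
            ⟨s(x, h2), by simp, hxe⟩⟩
          · simp [Walk.isPath_def, adj.ne]
          · intro w hw hwa hwb
            simp only [Walk.support_cons, Walk.support_nil, List.mem_cons] at hw
            rcases hw with rfl | hw
            · exact absurd rfl hwa
            · rcases hw with rfl | hw
              · exact absurd rfl hwb
              · simp at hw
      · have hxe : s(x, h2) ∉ E := fun hcon => hh (hE h2 x (by rwa [Sym2.eq_swap] at hcon))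
        obtain ⟨cfh, hcS, P', hP', hint, hPe, hPs, hPn⟩ := first_hit R hR hxS hh
        by_cases hcx : cfh = x
        · subst hcx
          have hK : (Walk.cons adj P').IsCycle :=
            (Walk.cons_isCycle_iff P' adj).mpr ⟨hP', fun hmem => hRe (hPe _ hmem)⟩
          have hy' : y ∈ (Walk.cons adj P').support := (hall _ _ hK).2.1
          rw [Walk.support_cons, List.mem_cons] at hy'
          rcases hy' with hy' | hy'
          · exact (hxy hy'.symm).elim
          · exact ((hint y hy' (fun h => hxy h.symm)) hyS).elim
        · refine ⟨x, cfh, Walk.cons adj P', fun hhx => hcx hhx.symm, ?_, hxS, hcS, ?_,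
            ⟨s(x, h2), by simp, hxe⟩⟩
          · refine (Walk.cons_isPath_iff _ _).mpr ⟨hP', fun hxP => ?_⟩
            exact (hint x hxP (fun h => hcx h.symm)) hxS
          · intro w hw hwp hwq
            rw [Walk.support_cons, List.mem_cons] at hw
            rcases hw with rfl | hw
            · exact absurd rfl hwp
            · exact hint w hw hwq
  obtain ⟨a, b, P, hab, hP, haS, hbS, hint, e₁, he₁P, he₁E⟩ := segex
  have hcnil : ¬ c.Nil := hc.not_nil
  have haC : a ∈ c.support := haS
  set C := c.rotate a haC with hCdef
  have hCc : C.IsCycle := hc.rotate haC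
  have hmemC : ∀ w, w ∈ C.support ↔ w ∈ c.support :=
    mem_support_rotate c hcnil haC
  have hedgeC : ∀ e, e ∈ C.edges ↔ e ∈ c.edges := fun e => (Walk.rotate_edges c a haC).mem_iff
  have hbC : b ∈ C.support := (hmemC b).mpr hbS
  set A1 := C.takeUntil b hbC with hA1def
  set A2 := C.dropUntil b hbC with hA2def
  have hspec : A1.append A2 = C := C.take_spec hbC
  have hCt : C.support.tail.Nodup := hCc.support_nodup
  have htail : C.support.tail = A1.support.tail ++ A2.support.tail := by
    conv_lhs => rw [← hspec, Walk.support_append, Walk.support_eq_cons A1]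
    rfl
  rw [htail] at hCt
  obtain ⟨hA1nd, hA2nd, hdisj⟩ := List.nodup_append.mp hCt
  have hba : b ≠ a := hab.symm
  have hbA1t : b ∈ A1.support.tail := Walk.end_mem_tail_support_of_ne hab A1
  have haA2t : a ∈ A2.support.tail := Walk.end_mem_tail_support_of_ne hba A2
  have hA1path : A1.IsPath := by
    rw [Walk.isPath_def, Walk.support_eq_cons A1]
    exact List.nodup_cons.mpr ⟨fun h => hdisj _ h _ haA2t rfl, hA1nd⟩
  have hA2path : A2.IsPath := by
    rw [Walk.isPath_def, Walk.support_eq_cons A2]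
    exact List.nodup_cons.mpr ⟨fun h => hdisj _ hbA1t _ h rfl, hA2nd⟩
  have hA1S : ∀ w ∈ A1.support, w ∈ S := fun w hw =>
    (hmemC w).mp (Walk.support_takeUntil_subset C hbC hw)
  have hA2S : ∀ w ∈ A2.support, w ∈ S := fun w hw =>
    (hmemC w).mp (Walk.support_dropUntil_subset C hbC hw)
  have hA1E : ∀ e ∈ A1.edges, e ∈ E := fun e he =>
    (hedgeC e).mp (Walk.edges_takeUntil_subset C hbC he)
  have hA2E : ∀ e ∈ A2.edges, e ∈ E := fun e he =>
    (hedgeC e).mp (Walk.edges_dropUntil_subset C hbC he)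
  have hinter : ∀ w, w ∈ A1.support → w ∈ A2.support → w = a ∨ w = b := by
    intro w h1 h2
    by_contra hcon
    push_neg at hcon
    rw [Walk.support_eq_cons A1, List.mem_cons] at h1
    rw [Walk.support_eq_cons A2, List.mem_cons] at h2
    rcases h1 with rfl | h1
    · exact hcon.1 rfl
    · rcases h2 with rfl | h2
      · exact hcon.2 rfl
      · exact hdisj _ h1 _ h2 rfl
  have hPnd : P.support.Nodup := hP.support_nodup
  have mk : ∀ (Q : G.Walk b a), Q.IsPath → (∀ w ∈ Q.support, w ∈ S) →
      (∀ e ∈ Q.edges, e ∈ E) → (P.append Q).IsCycle := by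
    intro Q hQ hQS hQE
    have hdisjE : ∀ e, e ∈ P.edges → e ∈ Q.edges → False := by
      intro e
      induction e using Sym2.ind with
      | _ v1 v2 =>
        intro heP heQ
        have hv1P : v1 ∈ P.support := P.fst_mem_support_of_mem_edges heP
        have hv2P : v2 ∈ P.support := P.snd_mem_support_of_mem_edges heP
        have heE : s(v1, v2) ∈ E := hQE _ heQ
        have hv1S : v1 ∈ S := hE v1 v2 heE
        have hv2S : v2 ∈ S := hE v2 v1 (by rwa [Sym2.eq_swap] at heE)
        have hne12 : v1 ≠ v2 := (P.adj_of_mem_edges heP).ne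
        have hv1ab : v1 = a ∨ v1 = b := by
          by_contra hcon; push_neg at hcon
          exact (hint v1 hv1P hcon.1 hcon.2) hv1S
        have hv2ab : v2 = a ∨ v2 = b := by
          by_contra hcon; push_neg at hcon
          exact (hint v2 hv2P hcon.1 hcon.2) hv2S
        have heab : s(v1, v2) = s(a, b) := by
          rcases hv1ab with rfl | rfl <;> rcases hv2ab with rfl | rfl
          · exact absurd rfl hne12
          · rfl
          · exact Sym2.eq_swap
          · exact absurd rfl hne12
        have hPedges := edges_eq_of_mem P hP (heab ▸ heP)
        rw [hPedges, List.mem_singleton] at he₁P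
        exact he₁E (he₁P ▸ (heab ▸ heE))
    rw [Walk.isCycle_def]
    refine ⟨⟨?_⟩, ?_, ?_⟩
    · rw [Walk.edges_append]
      exact List.nodup_append.mpr
        ⟨hP.isTrail.edges_nodup, hQ.isTrail.edges_nodup, fun e he1 e' he2 heq => hdisjE e he1 (by rw [heq]; exact he2)⟩
    · intro hnil
      have hlen := congrArg Walk.length hnil
      rw [Walk.length_append] at hlen
      simp only [Walk.length_nil] at hlen
      have : P.length = 0 := by omega
      exact Walk.not_nil_of_ne hab (Walk.nil_iff_length_eq.mpr this)
    · have hsup : (P.append Q).support.tail = P.support.tail ++ Q.support.tail := by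
        conv_lhs => rw [Walk.support_append, Walk.support_eq_cons P]
        rfl
      rw [hsup]
      refine List.nodup_append.mpr ⟨?_, ?_, ?_⟩
      · exact (List.nodup_cons.mp (Walk.support_eq_cons P ▸ hPnd)).2
      · exact (List.nodup_cons.mp (Walk.support_eq_cons Q ▸ hQ.support_nodup)).2
      · intro w hw1 w' hw2 hww; subst hww
        have hwP : w ∈ P.support := List.mem_of_mem_tail hw1
        have hwS : w ∈ S := hQS w (List.mem_of_mem_tail hw2)
        have hwab : w = a ∨ w = b := by
          by_contra hcon; push_neg at hcon
          exact (hint w hwP hcon.1 hcon.2) hwS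
        rcases hwab with rfl | rfl
        · exact (List.nodup_cons.mp (Walk.support_eq_cons P ▸ hPnd)).1 hw1
        · exact (List.nodup_cons.mp (Walk.support_eq_cons Q ▸ hQ.support_nodup)).1 hw2
  have hK1 := mk A2 hA2path hA2S hA2E
  have hK2 := mk A1.reverse hA1path.reverse
    (fun w hw => hA1S w (by rwa [Walk.support_reverse, List.mem_reverse] at hw))
    (fun e he => hA1E e (by rwa [Walk.edges_reverse, List.mem_reverse] at he))
  have key : ∀ w, w ∈ S → w ∈ (P.append A2).support → w ∈ (P.append A1.reverse).support →
      w = a ∨ w = b := by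
    intro w hwS h1 h2
    by_cases hP1 : w ∈ P.support
    · by_contra hcon; push_neg at hcon
      exact (hint w hP1 hcon.1 hcon.2) hwS
    · have hw2 : w ∈ A2.support := by
        rw [Walk.mem_support_append_iff] at h1
        rcases h1 with h | h
        · exact absurd h hP1
        · exact h
      have hw1 : w ∈ A1.support := by
        rw [Walk.mem_support_append_iff] at h2
        rcases h2 with h | h
        · exact absurd h hP1
        · rwa [Walk.support_reverse, List.mem_reverse] at h
      exact hinter w hw1 hw2
  obtain ⟨hx1, hy1, hz1⟩ := hall a _ hK1
  obtain ⟨hx2, hy2, hz2⟩ := hall a _ hK2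
  exact pigeon hxy hxz hyz (key x hxS hx1 hx2) (key y hyS hy1 hy2) (key z hzS hz1 hz2)

end Aux

/-- A forest `F` and a graph `G` containing at least two distinct cycles,
both on `n` vertices, have at most two common cards. -/
theorem stmt1 {V W : Type*} [Fintype V] [Fintype W] (F : SimpleGraph V) (G : SimpleGraph W)
    (hn : Fintype.card V = Fintype.card W)
    (hF : F.IsAcyclic) (hG : TwoCycles G) :
    ∀ k : ℕ, CommonCards F G k → k ≤ 2 := by
  classical
  intro k hk
  by_contra hk2
  push_neg at hk2
  obtain ⟨f, g, hfg⟩ := hk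
  obtain ⟨u, v, c, c', hc, hc', hne⟩ := hG
  let idx : Fin 3 → Fin k := fun i => ⟨i.val, by have := i.isLt; omega⟩
  let wv : Fin 3 → W := fun i => g (idx i)
  have hwinj : ∀ i j : Fin 3, wv i = wv j → i = j := by
    intro i j h
    have h2 := g.injective h
    exact Fin.ext (by simpa [idx] using congrArg Fin.val h2)
  have hacyc : ∀ i : Fin 3, (deleteVert G (wv i)).IsAcyclic := by
    intro i
    obtain ⟨e⟩ := hfg (idx i)
    exact acyclic_of_iso e.symm (induce_acyclic hF _)
  have hmem : ∀ (i : Fin 3) (w0 : W) (d : G.Walk w0 w0), d.IsCycle → wv i ∈ d.support := by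
    intro i w0 d hd
    by_contra hw
    exact induce_no_cycle (hacyc i) hd (fun t ht heq => hw (heq ▸ ht))
  have hall : ∀ (w0 : W) (d : G.Walk w0 w0), d.IsCycle →
      wv 0 ∈ d.support ∧ wv 1 ∈ d.support ∧ wv 2 ∈ d.support :=
    fun w0 d hd => ⟨hmem 0 w0 d hd, hmem 1 w0 d hd, hmem 2 w0 d hd⟩
  have h01 : wv 0 ≠ wv 1 := fun h => absurd (hwinj 0 1 h) (by decide)
  have h02 : wv 0 ≠ wv 2 := fun h => absurd (hwinj 0 2 h) (by decide)
  have h12 : wv 1 ≠ wv 2 := fun h => absurd (hwinj 1 2 h) (by decide)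
  rw [not_forall] at hne
  obtain ⟨e₀, he₀⟩ := hne
  by_cases hec : e₀ ∈ c.edges
  · have h2 : e₀ ∉ c'.edges := fun h => he₀ ⟨fun _ => h, fun _ => hec⟩
    exact main_lemma hc' hc h01 h02 h12 hall hec h2
  · have h2 : e₀ ∈ c'.edges := by
      by_contra h
      exact he₀ ⟨fun hc1 => absurd hc1 hec, fun hc2 => absurd hc2 h⟩
    exact main_lemma hc hc' h01 h02 h12 hall h2 hec
end

section
/- If a tree T and a connected unicyclic graph G, both on n ≥ 3 vertices, have at least ⌊n/2⌋ + 2 common cards, then there exists a common card T − v ≅ G − w with deg_T(v) = 1. -/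
open SimpleGraph

/-! Suppose no common card comes from a leaf of `T`. Deleting a vertex removes exactly its
degree worth of edges, so for a common card `T - v ≅ G - w` we get
`deg_G w = deg_T v + e(G) - e(T) ≥ 2 + (d + 1)`, where `e(T) = n - 1` and `e(G) = n + d` with
`d ≥ 0` because `G` is connected and has a cycle. With `k = ⌊n/2⌋ + 2` such vertices `w` and
every other vertex of degree at least one, the handshake lemma gives
`2n + 2d = 2 e(G) ≥ k (3 + d) + (n - k) ≥ n + 2k + 2d ≥ 2n + 3 + 2d`, a contradiction. -/

namespace SimpleGraph

open Finset

variable {V W : Type*}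

lemma natCard_edgeSet_eq_card_edgeFinset (G : SimpleGraph V) [Fintype G.edgeSet] :
    Nat.card G.edgeSet = #G.edgeFinset := by
  rw [Nat.card_eq_fintype_card, edgeFinset_card]

lemma natCard_edgeSet_deleteVert_add_degree [Fintype V] (G : SimpleGraph V) [DecidableRel G.Adj]
    (v : V) : Nat.card (deleteVert G v).edgeSet + G.degree v = Nat.card G.edgeSet := by
  classical
  have hinc : G.degree v ≤ #G.edgeFinset :=
    G.card_incidenceFinset_eq_degree v ▸ card_le_card (G.incidenceFinset_subset v)
  change Nat.card (G.induce {v}ᶜ).edgeSet + _ = _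
  rw [natCard_edgeSet_eq_card_edgeFinset, natCard_edgeSet_eq_card_edgeFinset,
    card_edgeFinset_induce_compl_singleton, card_edgeFinset_deleteIncidenceSet]
  omega

lemma degree_add_natCard_edgeSet_of_iso_deleteVert [Fintype V] [Fintype W]
    {F : SimpleGraph V} {G : SimpleGraph W} [DecidableRel F.Adj] [DecidableRel G.Adj]
    {v : V} {w : W} (e : deleteVert F v ≃g deleteVert G w) :
    F.degree v + Nat.card G.edgeSet = G.degree w + Nat.card F.edgeSet := by
  have := Nat.card_congr e.mapEdgeSet
  have := natCard_edgeSet_deleteVert_add_degree F v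
  have := natCard_edgeSet_deleteVert_add_degree G w
  omega

lemma IsTree.natCard_edgeSet_add_one [Finite V] {T : SimpleGraph V} (hT : T.IsTree) :
    Nat.card T.edgeSet + 1 = Nat.card V :=
  (isTree_iff_connected_and_card.1 hT).2

lemma Connected.natCard_le_natCard_edgeSet [Finite V] {G : SimpleGraph V} (hG : G.Connected)
    (hcyc : HasCycleG G) : Nat.card V ≤ Nat.card G.edgeSet := by
  have hnot : ¬ G.IsTree := fun hT ↦ by
    obtain ⟨u, c, hc⟩ := hcyc
    exact hT.isAcyclic c hc
  have hne : Nat.card G.edgeSet + 1 ≠ Nat.card V := fun h ↦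
    hnot (isTree_iff_connected_and_card.2 ⟨hG, h⟩)
  have := hG.card_vert_le_card_edgeSet_add_one
  omega

lemma Connected.card_mul_add_card_compl_le [Fintype V] [DecidableEq V] [Nontrivial V]
    {G : SimpleGraph V} [DecidableRel G.Adj] (hG : G.Connected) (S : Finset V) {m : ℕ}
    (hS : ∀ v ∈ S, m ≤ G.degree v) :
    #S * m + #Sᶜ ≤ 2 * Nat.card G.edgeSet := by
  have hSm : #S * m ≤ ∑ v ∈ S, G.degree v := by
    simpa [mul_comm] using card_nsmul_le_sum S (fun v ↦ G.degree v) m hS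
  have hSc : #Sᶜ ≤ ∑ v ∈ Sᶜ, G.degree v := by
    simpa using card_nsmul_le_sum Sᶜ (fun v ↦ G.degree v) 1
      fun v _ ↦ hG.preconnected.degree_pos_of_nontrivial v
  rw [natCard_edgeSet_eq_card_edgeFinset, ← sum_degrees_eq_twice_card_edges,
    ← sum_add_sum_compl S]
  omega

end SimpleGraph

theorem stmt4_general {V W : Type*} [Fintype V] [Fintype W]
    (T : SimpleGraph V) (G : SimpleGraph W) [DecidableRel T.Adj]
    (n : ℕ) (hnV : Fintype.card V = n) (hnW : Fintype.card W = n)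
    (hT : T.IsTree) (hGc : G.Connected) (hGu : Unicyclic G)
    (hcc : CommonCards T G (n / 2 + 2)) :
    ∃ (v : V) (w : W), Nonempty (deleteVert T v ≃g deleteVert G w) ∧ T.degree v = 1 := by
  classical
  by_contra! hleaf
  obtain ⟨f, g, hfg⟩ := hcc
  have hkn : n / 2 + 2 ≤ n := by simpa [hnW] using Fintype.card_le_of_embedding g
  have : Nontrivial V := Fintype.one_lt_card_iff_nontrivial.1 (by omega)
  have : Nontrivial W := Fintype.one_lt_card_iff_nontrivial.1 (by omega)
  have heT := hT.natCard_edgeSet_add_one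
  have heG := hGc.natCard_le_natCard_edgeSet hGu.1
  rw [Nat.card_eq_fintype_card (α := V), hnV] at heT
  rw [Nat.card_eq_fintype_card (α := W), hnW] at heG
  set d := Nat.card G.edgeSet - n
  have hdeg : ∀ w ∈ Finset.univ.map g, 3 + d ≤ G.degree w := by
    simp only [Finset.mem_map, Finset.mem_univ, true_and, forall_exists_index,
      forall_apply_eq_imp_iff]
    intro i
    obtain ⟨e⟩ := hfg i
    have := degree_add_natCard_edgeSet_of_iso_deleteVert e
    have := hT.connected.preconnected.degree_pos_of_nontrivial (f i)
    have := hleaf (f i) (g i) ⟨e⟩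
    omega
  have hsum := hGc.card_mul_add_card_compl_le _ hdeg
  rw [Finset.card_compl, Finset.card_map, Finset.card_univ, Fintype.card_fin, hnW] at hsum
  have : 2 * d ≤ (n / 2 + 2) * d := Nat.mul_le_mul_right d (by omega)
  have : (n / 2 + 2) * (3 + d) = 3 * (n / 2 + 2) + (n / 2 + 2) * d := by ring
  omega

/-- If a tree `T` and a connected unicyclic graph `G`, both on `n ≥ 3`
vertices, have at least `⌊n/2⌋ + 2` common cards, then some common card
`T - v ≅ G - w` has `deg_T(v) = 1`. -/
theorem stmt4 {V W : Type*} [Fintype V] [Fintype W]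
    (T : SimpleGraph V) (G : SimpleGraph W) [DecidableRel T.Adj]
    (n : ℕ) (hnV : Fintype.card V = n) (hnW : Fintype.card W = n) (hn3 : 3 ≤ n)
    (hT : T.IsTree) (hGc : G.Connected) (hGu : Unicyclic G)
    (hcc : CommonCards T G (n / 2 + 2)) :
    ∃ (v : V) (w : W), Nonempty (deleteVert T v ≃g deleteVert G w) ∧ T.degree v = 1 :=
  stmt4_general T G n hnV hnW hT hGc hGu hcc
end

section
/- If a tree T and a connected unicyclic graph G, both on n vertices, have at least ⌊n/2⌋ + 2 common cards, then G has at least n/4 − 1 vertices of degree 1. -/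
open SimpleGraph

/-!
Since `e(G) = e(T) + 1`, a common card `T - v ≅ G - w` forces `deg_G w = deg_T v + 1`.
A common card at a non-leaf `v` of `T` thus comes from a vertex of degree at least 3 in `G`;
as the degrees of `G` sum to `2n`, there are at most `Lf(G)` such vertices.
A common card at a leaf `v` of `T` comes from a vertex `w` of degree 2, and then
`Lf(T) ≤ Lf(T - v) + 1 = Lf(G - w) + 1 ≤ Lf(G) + 3` bounds the common cards at leaves of `T`.
Altogether `⌊n/2⌋ + 2 ≤ 2 Lf(G) + 3`.
-/

open SimpleGraph Finset

instance {V : Type*} (G : SimpleGraph V) [DecidableRel G.Adj] (v : V) :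
    DecidableRel (deleteVert G v).Adj :=
  inferInstanceAs (DecidableRel (G.induce {v}ᶜ).Adj)

def leafCount {V : Type*} [Fintype V] (G : SimpleGraph V) [DecidableRel G.Adj] : ℕ :=
  #{v | G.degree v = 1}

section

variable {V W : Type*} [Fintype V] [Fintype W]

theorem SimpleGraph.Iso.leafCount_eq {G : SimpleGraph V} {G' : SimpleGraph W}
    [DecidableRel G.Adj] [DecidableRel G'.Adj] (φ : G ≃g G') : leafCount G = leafCount G' := by
  rw [leafCount, leafCount, ← Fintype.card_subtype, ← Fintype.card_subtype]
  exact Fintype.card_congr (φ.toEquiv.subtypeEquiv fun v => by simp)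

theorem card_three_le_degree_le_leafCount (G : SimpleGraph V) [DecidableRel G.Adj]
    (hdeg : ∀ v, G.degree v ≠ 0) (hE : #G.edgeFinset ≤ Fintype.card V) :
    #{v | 3 ≤ G.degree v} ≤ leafCount G := by
  have hpt : ∀ v, 2 + (if 3 ≤ G.degree v then 1 else 0)
      ≤ G.degree v + (if G.degree v = 1 then 1 else 0) := by
    intro v
    have := hdeg v
    split_ifs <;> omega
  have hsum := Finset.sum_le_sum fun v (_ : v ∈ univ) => hpt v
  rw [sum_add_distrib, sum_add_distrib, sum_boole, sum_boole, sum_const, smul_eq_mul, card_univ,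
    sum_degrees_eq_twice_card_edges] at hsum
  simp only [Nat.cast_id] at hsum
  rw [leafCount]
  omega

end

section deleteVert

variable {V : Type*} [Fintype V] [DecidableEq V] (G : SimpleGraph V) [DecidableRel G.Adj] (v : V)

theorem card_edgeFinset_deleteVert_add_degree :
    #(deleteVert G v).edgeFinset + G.degree v = #G.edgeFinset := by
  have h := G.card_edgeFinset_induce_compl_singleton v
  rw [card_edgeFinset_deleteIncidenceSet] at h
  have := G.degree_le_card_edgeFinset v
  change #(G.induce {v}ᶜ).edgeFinset + _ = _
  omega

theorem map_neighborFinset_deleteVert (u : {w // w ≠ v}) :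
    ((deleteVert G v).neighborFinset u).map (Function.Embedding.subtype _) =
      (G.neighborFinset u).erase v := by
  ext x
  simp only [mem_map, mem_neighborFinset, Function.Embedding.coe_subtype, mem_erase]
  constructor
  · rintro ⟨y, hy, rfl⟩
    exact ⟨y.2, hy⟩
  · rintro ⟨hx, hadj⟩
    exact ⟨⟨x, hx⟩, hadj, rfl⟩

theorem degree_deleteVert_add_ite (u : {w // w ≠ v}) :
    (deleteVert G v).degree u + (if G.Adj u v then 1 else 0) = G.degree u := by
  rw [← card_neighborFinset_eq_degree, ← card_neighborFinset_eq_degree,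
    ← card_map (Function.Embedding.subtype _), map_neighborFinset_deleteVert]
  split_ifs with h
  · exact card_erase_add_one (by simpa using h)
  · rw [erase_eq_of_notMem (by simpa using h), add_zero]

end deleteVert

section leafCount

variable {V : Type*} [Fintype V] [DecidableEq V]

theorem leafCount_deleteVert_le (G : SimpleGraph V) [DecidableRel G.Adj] (v : V) :
    leafCount (deleteVert G v) ≤ leafCount G + G.degree v := by
  calc leafCount (deleteVert G v)
      ≤ #(({u | G.degree u = 1} : Finset V) ∪ G.neighborFinset v) := by
        refine card_le_card_of_injOn Subtype.val (fun u hu => ?_) Subtype.val_injective.injOn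
        have hdeg := degree_deleteVert_add_ite G v u
        simp only [coe_filter, mem_univ, true_and, Set.mem_ofPred_eq] at hu
        simp only [coe_union, coe_filter, mem_univ, true_and, Set.mem_union, Set.mem_ofPred_eq,
          mem_coe, mem_neighborFinset]
        split_ifs at hdeg with hadj
        · exact Or.inr hadj.symm
        · omega
    _ ≤ leafCount G + G.degree v := by
        rw [← card_neighborFinset_eq_degree]
        exact card_union_le _ _

theorem SimpleGraph.Connected.leafCount_le_leafCount_deleteVert_add_one {G : SimpleGraph V}
    [DecidableRel G.Adj] {v : V} (hG : G.Connected) (h3 : 3 ≤ Fintype.card V)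
    (hv : G.degree v = 1) : leafCount G ≤ leafCount (deleteVert G v) + 1 := by
  have hconn : (deleteVert G v).Connected := hG.induce_compl_singleton_of_degree_eq_one hv
  have : Nontrivial {w // w ≠ v} := by
    rw [← Fintype.one_lt_card_iff_nontrivial, Fintype.card_subtype_compl, Fintype.card_subtype_eq]
    omega
  have hsub : ({u | G.degree u = 1} : Finset V).erase v ⊆
      ({u | (deleteVert G v).degree u = 1} : Finset _).map (Function.Embedding.subtype _) := by
    intro x hx
    obtain ⟨hxv, hx⟩ := mem_erase.1 hx
    have hdeg : (deleteVert G v).degree ⟨x, hxv⟩ + (if G.Adj x v then 1 else 0) = G.degree x :=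
      degree_deleteVert_add_ite G v _
    have hpos := hconn.preconnected.degree_pos_of_nontrivial ⟨x, hxv⟩
    simp only [mem_filter, mem_univ, true_and] at hx
    simp only [mem_map, mem_filter, mem_univ, true_and, Function.Embedding.coe_subtype]
    exact ⟨⟨x, hxv⟩, by split_ifs at hdeg <;> omega, rfl⟩
  have := card_le_card hsub
  rw [card_map] at this
  have := pred_card_le_card_erase (s := ({u | G.degree u = 1} : Finset V)) (a := v)
  rw [leafCount, leafCount]
  omega

end leafCount

section Unicyclic

variable {V : Type*} {G : SimpleGraph V}

theorem Unicyclic.isAcyclic_deleteEdges (hG : Unicyclic G) {u : V} {c : G.Walk u u}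
    (hc : c.IsCycle) {e : Sym2 V} (he : e ∈ c.edges) : (G.deleteEdges {e}).IsAcyclic := by
  intro w p hp
  have hle := G.deleteEdges_le {e}
  have hep : e ∈ p.edges := by
    simpa [Walk.edges_mapLe_eq_edges] using
      (hG.2 u w c (p.mapLe hle) hc (hp.mapLe hle) e).1 he
  simpa using p.edges_subset_edgeSet hep

theorem Unicyclic.card_edgeFinset [Fintype V] [DecidableRel G.Adj] (hc : G.Connected)
    (hG : Unicyclic G) : #G.edgeFinset = Fintype.card V := by
  classical
  obtain ⟨u, c, hcyc⟩ := hG.1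
  apply le_antisymm
  · obtain ⟨e, he⟩ := List.exists_mem_of_ne_nil _ (Walk.edges_eq_nil.not.mpr hcyc.not_nil)
    obtain ⟨F, hHF, -, hF⟩ := hc.exists_isTree_le_of_le_of_isAcyclic (G.deleteEdges_le {e})
      (hG.isAcyclic_deleteEdges hcyc he)
    have hGH : G.edgeFinset ⊆ insert e (G.deleteEdges {e}).edgeFinset := by
      intro x hx
      by_cases hxe : x = e
      · simp [hxe]
      · simpa [hxe] using hx
    calc #G.edgeFinset
        ≤ #(G.deleteEdges {e}).edgeFinset + 1 := (card_le_card hGH).trans (card_insert_le _ _)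
      _ ≤ #F.edgeFinset + 1 := by gcongr
      _ = Fintype.card V := hF.card_edgeFinset
  · by_contra! hlt
    have hcard := hc.card_vert_le_card_edgeSet_add_one
    rw [Nat.card_eq_fintype_card, Nat.card_eq_fintype_card, ← edgeFinset_card] at hcard
    have htree : G.IsTree := isTree_iff_connected_and_card.2 ⟨hc, by
      rw [Nat.card_eq_fintype_card, Nat.card_eq_fintype_card, ← edgeFinset_card]; omega⟩
    exact htree.isAcyclic c hcyc

end Unicyclic

section CommonCards

variable {V W : Type*} [Fintype V] [Fintype W] [DecidableEq V] [DecidableEq W]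
  {F : SimpleGraph V} {G : SimpleGraph W} [DecidableRel F.Adj] [DecidableRel G.Adj]

theorem card_edgeFinset_add_degree_eq_of_iso_deleteVert {v : V} {w : W}
    (φ : deleteVert F v ≃g deleteVert G w) :
    #F.edgeFinset + G.degree w = #G.edgeFinset + F.degree v := by
  have := card_edgeFinset_deleteVert_add_degree F v
  have := card_edgeFinset_deleteVert_add_degree G w
  have := φ.card_edgeFinset_eq
  omega

theorem card_le_two_mul_leafCount_add_three (hF : F.IsTree) (hG : G.Connected)
    (hGE : #G.edgeFinset = Fintype.card W) (hVW : Fintype.card V = Fintype.card W)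
    (h3 : 3 ≤ Fintype.card W) {k : ℕ} (hcc : CommonCards F G k) :
    k ≤ 2 * leafCount G + 3 := by
  obtain ⟨f, g, hfg⟩ := hcc
  have hFE := hF.card_edgeFinset
  have hdeg : ∀ i, G.degree (g i) = F.degree (f i) + 1 := fun i => by
    have := card_edgeFinset_add_degree_eq_of_iso_deleteVert (hfg i).some
    omega
  have : Nontrivial V := Fintype.one_lt_card_iff_nontrivial.1 (by omega)
  have : Nontrivial W := Fintype.one_lt_card_iff_nontrivial.1 (by omega)
  have hFpos := hF.connected.preconnected.degree_pos_of_nontrivial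
  have hGpos := hG.preconnected.degree_pos_of_nontrivial
  have hleaves : #{i | F.degree (f i) = 1} ≤ leafCount G + 3 := by
    obtain h | ⟨i, hi⟩ := Finset.eq_empty_or_nonempty {i | F.degree (f i) = 1}
    · simp [h]
    simp only [mem_filter, mem_univ, true_and] at hi
    calc #{i | F.degree (f i) = 1}
        ≤ leafCount F := card_le_card_of_injOn f (by simp [Set.MapsTo]) f.injective.injOn
      _ ≤ leafCount (deleteVert F (f i)) + 1 :=
          hF.connected.leafCount_le_leafCount_deleteVert_add_one (hVW ▸ h3) hi
      _ = leafCount (deleteVert G (g i)) + 1 := by rw [(hfg i).some.leafCount_eq]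
      _ ≤ leafCount G + 3 := by
          have := leafCount_deleteVert_le G (g i)
          have := hdeg i
          omega
  have hbranch : #{i | ¬F.degree (f i) = 1} ≤ leafCount G := by
    calc #{i | ¬F.degree (f i) = 1}
        ≤ #{w | 3 ≤ G.degree w} := by
          refine card_le_card_of_injOn g (fun i hi => ?_) g.injective.injOn
          simp only [coe_filter, mem_univ, true_and, Set.mem_ofPred_eq] at hi ⊢
          have := hdeg i
          have := hFpos (f i)
          omega
      _ ≤ leafCount G := card_three_le_degree_le_leafCount G (fun w => (hGpos w).ne') hGE.le
  have hsplit := card_filter_add_card_filter_not (s := (univ : Finset (Fin k)))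
    (fun i => F.degree (f i) = 1)
  rw [card_univ, Fintype.card_fin] at hsplit
  omega

end CommonCards

theorem stmt5_general {V W : Type*} [Fintype V] [Fintype W]
    (T : SimpleGraph V) (G : SimpleGraph W) [DecidableRel G.Adj]
    (n : ℕ) (hnV : Fintype.card V = n) (hnW : Fintype.card W = n)
    (hT : T.IsTree) (hGc : G.Connected) (hGu : Unicyclic G)
    (hcc : CommonCards T G (n / 2 + 2)) :
    (n : ℝ) / 4 - 1 ≤ (Finset.univ.filter (fun w : W => G.degree w = 1)).card := by
  classical
  have hGE := hGu.card_edgeFinset hGc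
  have hn : n ≤ 4 * leafCount G + 4 := by
    by_cases h3 : 3 ≤ n
    · have := card_le_two_mul_leafCount_add_three hT hGc hGE (hnV.trans hnW.symm) (by omega) hcc
      omega
    · omega
  change (n : ℝ) / 4 - 1 ≤ leafCount G
  have : (n : ℝ) ≤ 4 * leafCount G + 4 := by exact_mod_cast hn
  linarith

/-- If a tree `T` and a connected unicyclic graph `G`, both on `n` vertices,
have at least `⌊n/2⌋ + 2` common cards, then `G` has at least `n/4 - 1` vertices of
degree 1. -/
theorem stmt5 {V W : Type*} [Fintype V] [Fintype W] [DecidableEq W]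
    (T : SimpleGraph V) (G : SimpleGraph W) [DecidableRel G.Adj]
    (n : ℕ) (hnV : Fintype.card V = n) (hnW : Fintype.card W = n)
    (hT : T.IsTree) (hGc : G.Connected) (hGu : Unicyclic G)
    (hcc : CommonCards T G (n / 2 + 2)) :
    (n : ℝ) / 4 - 1 ≤ (Finset.univ.filter (fun w : W => G.degree w = 1)).card :=
  stmt5_general T G n hnV hnW hT hGc hGu hcc
end

section
/- Every graph G on n vertices whose girth is at least 2n/3 + 1 contains at most one cycle. -/
open SimpleGraph

/-! The proof counts vertices. Let `xy` be an edge of a cycle `C` that is missing from another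
cycle `C'`. In `G - xy` the vertices `x` and `y` stay connected; a shortest `x`-`y` path `P` there
closes up with `xy` to a cycle of `G`, so `|P| ≥ g - 1`. Since `C'` lives in `G - xy`, any two of
its vertices are at distance at most `|C'| / 2` there, while distinct vertices of the geodesic `P`
are at distinct distances from `x`; hence `P` and `C'` share at most `|C'| / 2 + 1` vertices. So
`g + |C'| / 2 ≤ n + 1`, which contradicts `g ≥ 2n/3 + 1`. -/

open Finset

lemma Finset.card_le_add_one_of_injOn_of_le_add {α : Type*} {s : Finset α} {f : α → ℕ} {k : ℕ}
    (hf : Set.InjOn f s) (hk : ∀ a ∈ s, ∀ b ∈ s, f b ≤ f a + k) : #s ≤ k + 1 := by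
  rcases s.eq_empty_or_nonempty with rfl | hs
  · simp
  obtain ⟨a₀, ha₀, hmin⟩ := s.exists_min_image f hs
  calc #s = #(s.image f) := (card_image_of_injOn hf).symm
    _ ≤ #(Icc (f a₀) (f a₀ + k)) :=
      card_le_card fun _ hm ↦ by
        obtain ⟨b, hb, rfl⟩ := mem_image.1 hm
        exact mem_Icc.2 ⟨hmin b hb, hk a₀ ha₀ b hb⟩
    _ = k + 1 := by rw [Nat.card_Icc]; omega

namespace SimpleGraph

variable {V : Type*} {G : SimpleGraph V}

namespace Walk

lemma IsCycle.card_support_toFinset [DecidableEq V] {u : V} {c : G.Walk u u} (hc : c.IsCycle) :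
    #c.support.toFinset = c.length := by
  rw [← cons_tail_support, List.toFinset_cons,
    insert_eq_of_mem (List.mem_toFinset.2 (end_mem_tail_support hc.not_nil)),
    List.toFinset_card_of_nodup hc.support_nodup, List.length_tail, length_support,
    Nat.add_sub_cancel]

lemma IsPath.card_support_toFinset [DecidableEq V] {x y : V} {p : G.Walk x y} (hp : p.IsPath) :
    #p.support.toFinset = p.length + 1 := by
  rw [List.toFinset_card_of_nodup hp.support_nodup, length_support]

lemma two_mul_dist_le_length_of_mem_support {a b : V} (c : G.Walk a a) (hb : b ∈ c.support) :
    2 * G.dist a b ≤ c.length := by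
  classical
  have hsplit : (c.takeUntil b hb).length + (c.dropUntil b hb).length = c.length := by
    rw [← length_append, take_spec]
  have hto := dist_le (c.takeUntil b hb)
  have hback := dist_le (c.dropUntil b hb).reverse
  rw [length_reverse] at hback
  omega

lemma two_mul_dist_le_length {u a b : V} (c : G.Walk u u) (ha : a ∈ c.support)
    (hb : b ∈ c.support) : 2 * G.dist a b ≤ c.length := by
  classical
  simpa using (c.rotate a ha).two_mul_dist_le_length_of_mem_support
    ((mem_support_rotate_iff c a ha).2 hb)

lemma dist_eq_length_takeUntil [DecidableEq V] {x y w : V} (p : G.Walk x y)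
    (hp : p.length = G.dist x y) (hw : w ∈ p.support) : G.dist x w = (p.takeUntil w hw).length := by
  have hsplit : (p.takeUntil w hw).length + (p.dropUntil w hw).length = p.length := by
    rw [← length_append, take_spec]
  have hto := dist_le (p.takeUntil w hw)
  have hfrom := dist_le (p.dropUntil w hw)
  have htri := Reachable.dist_triangle_left ⟨p.takeUntil w hw⟩ y
  omega

lemma injOn_dist_support {x y : V} (p : G.Walk x y) (hp : p.length = G.dist x y) :
    Set.InjOn (G.dist x) {w | w ∈ p.support} := by
  classical
  intro a ha b hb hab
  rw [← getVert_length_takeUntil ha, ← getVert_length_takeUntil hb,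
    ← dist_eq_length_takeUntil p hp ha, ← dist_eq_length_takeUntil p hp hb, hab]

lemma card_support_inter_le [DecidableEq V] {x y u : V} (p : G.Walk x y)
    (hp : p.length = G.dist x y) (c : G.Walk u u) :
    #(p.support.toFinset ∩ c.support.toFinset) ≤ c.length / 2 + 1 := by
  refine Finset.card_le_add_one_of_injOn_of_le_add (f := G.dist x) ?_ ?_
  · exact (p.injOn_dist_support hp).mono fun w hw ↦ List.mem_toFinset.1 (mem_inter.1 hw).1
  · intro a ha b hb
    simp only [mem_inter, List.mem_toFinset] at ha hb
    have htri := Reachable.dist_triangle_left ⟨p.takeUntil a ha.1⟩ b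
    have hab := c.two_mul_dist_le_length ha.2 hb.2
    omega

end Walk

theorem dist_add_length_le_card_add_half [Fintype V] (x y : V) {u : V} {c : G.Walk u u}
    (hc : c.IsCycle) : G.dist x y + c.length ≤ Fintype.card V + c.length / 2 := by
  classical
  have hc_card : c.length ≤ Fintype.card V := hc.card_support_toFinset ▸ card_le_univ _
  by_cases hxy : G.Reachable x y
  · obtain ⟨p, hp, hlen⟩ := hxy.exists_path_of_dist
    have hunion := card_le_univ (p.support.toFinset ∪ c.support.toFinset)
    have hinter := p.card_support_inter_le hlen c
    have hsum := card_union_add_card_inter p.support.toFinset c.support.toFinset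
    rw [hp.card_support_toFinset, hc.card_support_toFinset, hlen] at hsum
    omega
  · rw [dist_eq_zero_of_not_reachable hxy]
    omega

lemma exists_isCycle_length_eq_dist_deleteEdges_add_one {x y : V} (hxy : G.Adj x y)
    (hr : (G.deleteEdges {s(x, y)}).Reachable x y) :
    ∃ c : G.Walk x x, c.IsCycle ∧ c.length = (G.deleteEdges {s(x, y)}).dist x y + 1 := by
  obtain ⟨p, hp, hlen⟩ := hr.symm.exists_path_of_dist
  have hsub : ∀ e ∈ p.edges, e ∈ G.edgeSet := fun e he ↦
    edgeSet_mono (deleteEdges_le _) (p.edges_subset_edgeSet he)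
  refine ⟨.cons hxy (p.transfer G hsub), ?_, ?_⟩
  · refine (Walk.cons_isCycle_iff _ hxy).2 ⟨hp.transfer hsub, fun he ↦ ?_⟩
    rw [Walk.edges_transfer] at he
    simpa using p.edges_subset_edgeSet he
  · rw [Walk.length_cons, Walk.length_transfer, hlen, dist_comm]

theorem exists_isCycle_length_add_length_le_of_notMem_edges [Fintype V] {u v : V}
    {c : G.Walk u u} {c' : G.Walk v v} (hc : c.IsCycle) (hc' : c'.IsCycle) {e : Sym2 V}
    (he : e ∈ c.edges) (he' : e ∉ c'.edges) :
    ∃ (w : V) (c₀ : G.Walk w w), c₀.IsCycle ∧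
      c₀.length + c'.length ≤ Fintype.card V + 1 + c'.length / 2 := by
  induction e using Sym2.ind with
  | h x y =>
    obtain ⟨hxy, hr⟩ := adj_and_reachable_delete_edges_iff_exists_cycle.2 ⟨u, c, hc, he⟩
    obtain ⟨c₀, hc₀, hlen⟩ := exists_isCycle_length_eq_dist_deleteEdges_add_one hxy hr
    have hc'_del : ∀ e ∈ c'.edges, e ∉ ({s(x, y)} : Set (Sym2 V)) := by
      rintro e he rfl
      exact he' he
    have hcount :=
      dist_add_length_le_card_add_half x y (hc'.toDeleteEdges G {s(x, y)} hc'_del)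
    rw [Walk.length_transfer] at hcount
    exact ⟨x, c₀, hc₀, by omega⟩

end SimpleGraph

/-- Every graph `G` on `n` vertices whose girth is at least `2n/3 + 1`
(i.e. every cycle has length at least `2n/3 + 1`) contains at most one cycle. -/
theorem stmt6 {V : Type*} [Fintype V] (G : SimpleGraph V)
    (hgirth : ∀ (u : V) (c : G.Walk u u), c.IsCycle →
      2 * (Fintype.card V : ℝ) / 3 + 1 ≤ c.length) :
    ∀ (u v : V) (c : G.Walk u u) (c' : G.Walk v v),
      c.IsCycle → c'.IsCycle → ∀ e, e ∈ c.edges ↔ e ∈ c'.edges := by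
  suffices h : ∀ {u v : V} (c : G.Walk u u) (c' : G.Walk v v),
      c.IsCycle → c'.IsCycle → ∀ e ∈ c.edges, e ∈ c'.edges from
    fun u v c c' hc hc' e ↦ ⟨h c c' hc hc' e, h c' c hc' hc e⟩
  intro u v c c' hc hc' e he
  by_contra he'
  obtain ⟨w, c₀, hc₀, hlen⟩ := exists_isCycle_length_add_length_le_of_notMem_edges hc hc' he he'
  have hg₀ := hgirth w c₀ hc₀
  have hg' := hgirth v c' hc'
  have hhalf : ((c'.length / 2 : ℕ) : ℝ) ≤ c'.length / 2 := Nat.cast_div_le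
  have hlen' : (c₀.length + c'.length : ℝ) ≤ Fintype.card V + 1 + (c'.length / 2 : ℕ) := by
    exact_mod_cast hlen
  linarith
end

section
/- Let F be a forest and G a graph with exactly one cycle, both on n vertices, such that F and G have at least ⌊n/2⌋ + 1 common cards. Then the number of connected components of F is at most the number of connected components of G plus one. -/
/-!
Deleting a vertex `v` removes `deg v` edges, so a common card `F - v ≅ G - w` gives
`e(F) - deg_F v = e(G) - deg_G w`. A forest has `κ + e = n` and a unicyclic graph `κ + e = n + 1`,
so it suffices to show `e(G) ≤ e(F) + 2`. Otherwise each of the `⌊n/2⌋ + 1` vertices of `G`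
used by the common cards has degree at least `3`. But in a unicyclic graph the isolated vertices
and the component of the cycle are distinct components, so `e(G)` is at most the number of
non-isolated vertices; counting degrees, at most `n/2` vertices can then have degree `≥ 3`.
-/

open SimpleGraph

open Finset

namespace SimpleGraph

variable {V : Type*} {G : SimpleGraph V} {u v x y : V}

lemma Reachable.deleteEdges_or (h : G.Reachable x y) :
    (G.deleteEdges {s(u, v)}).Reachable x y ∨
      (G.deleteEdges {s(u, v)}).Reachable x u ∧ (G.deleteEdges {s(u, v)}).Reachable v y ∨
      (G.deleteEdges {s(u, v)}).Reachable x v ∧ (G.deleteEdges {s(u, v)}).Reachable u y := by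
  obtain ⟨p⟩ := h
  induction p with
  | nil => exact Or.inl .rfl
  | @cons x z y hxz _ ih =>
    by_cases he : s(x, z) = s(u, v)
    · rcases Sym2.eq_iff.mp he with ⟨rfl, rfl⟩ | ⟨rfl, rfl⟩ <;>
        rcases ih with h | ⟨-, h⟩ | ⟨-, h⟩ <;> simp_all
    · have hxz' : (G.deleteEdges {s(u, v)}).Adj x z := by simp [hxz, he]
      rcases ih with h | ⟨h, h'⟩ | ⟨h, h'⟩
      · exact Or.inl (hxz'.reachable.trans h)
      · exact Or.inr (Or.inl ⟨hxz'.reachable.trans h, h'⟩)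
      · exact Or.inr (Or.inr ⟨hxz'.reachable.trans h, h'⟩)

lemma ConnectedComponent.eq_or_of_map_deleteEdges_eq
    {C D : (G.deleteEdges {s(u, v)}).ConnectedComponent}
    (h : C.map (Hom.ofLE (G.deleteEdges_le _)) = D.map (Hom.ofLE (G.deleteEdges_le _))) :
    C = D ∨
      C = (G.deleteEdges {s(u, v)}).connectedComponentMk u ∧
        D = (G.deleteEdges {s(u, v)}).connectedComponentMk v ∨
      C = (G.deleteEdges {s(u, v)}).connectedComponentMk v ∧
        D = (G.deleteEdges {s(u, v)}).connectedComponentMk u := by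
  induction C using ConnectedComponent.ind with | h x => ?_
  induction D using ConnectedComponent.ind with | h y => ?_
  simp only [ConnectedComponent.map_mk, Hom.ofLE_apply, ConnectedComponent.eq] at h ⊢
  rcases h.deleteEdges_or (u := u) (v := v) with h | ⟨hxu, hvy⟩ | ⟨hxv, huy⟩
  · exact Or.inl h
  · exact Or.inr (Or.inl ⟨hxu, hvy.symm⟩)
  · exact Or.inr (Or.inr ⟨hxv, huy.symm⟩)

lemma card_connectedComponent_deleteEdges_of_reachable
    (h : (G.deleteEdges {s(u, v)}).Reachable u v) :
    Nat.card (G.deleteEdges {s(u, v)}).ConnectedComponent = Nat.card G.ConnectedComponent := by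
  refine Nat.card_eq_of_bijective _
    ⟨fun C D hCD => ?_, ConnectedComponent.surjective_map_ofLE (G.deleteEdges_le _)⟩
  have huv := ConnectedComponent.sound h
  rcases ConnectedComponent.eq_or_of_map_deleteEdges_eq hCD with h | ⟨rfl, rfl⟩ | ⟨rfl, rfl⟩
  · exact h
  · exact huv
  · exact huv.symm

lemma card_connectedComponent_deleteEdges_of_isBridge [Finite V] (hadj : G.Adj u v)
    (hb : G.IsBridge s(u, v)) :
    Nat.card (G.deleteEdges {s(u, v)}).ConnectedComponent = Nat.card G.ConnectedComponent + 1 := by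
  classical
  set G' := G.deleteEdges {s(u, v)}
  have huv : G'.connectedComponentMk u ≠ G'.connectedComponentMk v :=
    fun h => hb (ConnectedComponent.exact h)
  have hbij : Function.Bijective fun C : {C // C ≠ G'.connectedComponentMk v} =>
      C.1.map (Hom.ofLE (G.deleteEdges_le {s(u, v)})) := by
    refine ⟨fun ⟨C, hC⟩ ⟨D, hD⟩ hCD => ?_, fun C => ?_⟩
    · rcases ConnectedComponent.eq_or_of_map_deleteEdges_eq hCD with h | ⟨-, h⟩ | ⟨h, -⟩
      exacts [Subtype.ext h, absurd h hD, absurd h hC]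
    obtain ⟨C, rfl⟩ := ConnectedComponent.surjective_map_ofLE (G.deleteEdges_le {s(u, v)}) C
    by_cases hC : C = G'.connectedComponentMk v
    · refine ⟨⟨_, huv⟩, ?_⟩
      rw [hC]
      exact ConnectedComponent.sound hadj.reachable
    · exact ⟨⟨C, hC⟩, rfl⟩
  rw [← Nat.card_congr (Equiv.optionSubtypeNe (G'.connectedComponentMk v)), Finite.card_option,
    Nat.card_eq_of_bijective _ hbij]

lemma card_edgeSet_deleteEdges_add_one [Finite V] {e : Sym2 V} (he : e ∈ G.edgeSet) :
    Nat.card (G.deleteEdges {e}).edgeSet + 1 = Nat.card G.edgeSet := by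
  rw [edgeSet_deleteEdges, Nat.card_coe_set_eq, Nat.card_coe_set_eq]
  exact Set.ncard_sdiff_singleton_add_one he (Set.toFinite _)

lemma card_connectedComponent_bot :
    Nat.card (⊥ : SimpleGraph V).ConnectedComponent = Nat.card V :=
  (Nat.card_eq_of_bijective _ ⟨fun _ _ h => reachable_bot.mp (ConnectedComponent.exact h),
    fun C => C.exists_rep⟩).symm

theorem IsAcyclic.card_connectedComponent_add_card_edgeSet [Finite V] (hG : G.IsAcyclic) :
    Nat.card G.ConnectedComponent + Nat.card G.edgeSet = Nat.card V := by
  induction hm : Nat.card G.edgeSet generalizing G with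
  | zero =>
    obtain rfl : G = ⊥ := by
      rwa [Nat.card_coe_set_eq, Set.ncard_eq_zero (Set.toFinite _), edgeSet_eq_empty] at hm
    simpa using card_connectedComponent_bot
  | succ m ih =>
    obtain ⟨e, he⟩ : G.edgeSet.Nonempty :=
      Set.nonempty_of_ncard_ne_zero (by rw [← Nat.card_coe_set_eq, hm]; omega)
    cases e with | h u v
    have hb : G.IsBridge s(u, v) := isAcyclic_iff_forall_isBridge.mp hG he
    have hcard := card_edgeSet_deleteEdges_add_one he
    have hdel := ih (hG.anti (G.deleteEdges_le {s(u, v)})) (by omega)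
    rw [card_connectedComponent_deleteEdges_of_isBridge he hb] at hdel
    omega

lemma IsIsolated.eq_of_reachable (hx : G.IsIsolated x) (h : G.Reachable x y) : x = y := by
  obtain ⟨p⟩ := h
  cases p with
  | nil => rfl
  | cons hadj _ => exact absurd hadj (hx _)

lemma card_filter_degree_eq_zero_lt_card_connectedComponent [Fintype V] [DecidableRel G.Adj]
    (huv : G.Adj u v) : #{w | G.degree w = 0} < Nat.card G.ConnectedComponent := by
  classical
  set I : Finset V := {w | G.degree w = 0}
  have hu : u ∉ I := by
    simpa [I, degree_eq_zero] using huv.not_isIsolated_left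
  have hinj : Set.InjOn G.connectedComponentMk ↑(insert u I) := by
    intro a ha b hb hab
    have hr := ConnectedComponent.exact hab
    simp only [I, coe_insert, coe_filter, mem_univ, true_and, Set.mem_insert_iff,
      Set.mem_ofPred_eq, degree_eq_zero] at ha hb
    rcases ha with rfl | ha
    · rcases hb with rfl | hb
      exacts [rfl, (hb.eq_of_reachable hr.symm).symm]
    · exact ha.eq_of_reachable hr
  have := card_le_card_of_injOn _ (fun _ _ => mem_univ _) hinj
  rw [card_insert_of_notMem hu, card_univ, ← Nat.card_eq_fintype_card] at this
  omega

lemma two_mul_card_edgeSet_eq_sum_degree [Fintype V] [DecidableRel G.Adj] :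
    2 * Nat.card G.edgeSet = ∑ w, G.degree w := by
  rw [sum_degrees_eq_twice_card_edges, Nat.card_eq_fintype_card, edgeFinset_card]

lemma card_filter_degree_ne_zero_add_two_mul_card_le [Fintype V] [DecidableRel G.Adj]
    {S : Finset V} (hS : ∀ w ∈ S, 3 ≤ G.degree w) :
    #{w | G.degree w ≠ 0} + 2 * #S ≤ 2 * Nat.card G.edgeSet := by
  classical
  rw [two_mul_card_edgeSet_eq_sum_degree]
  calc #{w | G.degree w ≠ 0} + 2 * #S
      = ∑ w, ((if G.degree w ≠ 0 then 1 else 0) + if w ∈ S then 2 else 0) := by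
        simp [sum_add_distrib, card_filter, mul_comm]
    _ ≤ ∑ w, G.degree w := sum_le_sum fun w _ => by
        by_cases hw : w ∈ S
        · have := hS w hw
          split_ifs <;> omega
        · split_ifs <;> omega

lemma card_edgeSet_deleteVert_add_degree [Fintype V] [DecidableRel G.Adj] (v : V) :
    Nat.card (deleteVert G v).edgeSet + G.degree v = Nat.card G.edgeSet := by
  classical
  have hdel : Nat.card (deleteVert G v).edgeSet = #G.edgeFinset - G.degree v := by
    rw [← card_edgeFinset_deleteIncidenceSet, ← card_edgeFinset_induce_compl_singleton,
      edgeFinset_card, ← Nat.card_eq_fintype_card]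
    rfl
  have hG : Nat.card G.edgeSet = #G.edgeFinset := by rw [Nat.card_eq_fintype_card, edgeFinset_card]
  have := G.degree_le_card_edgeFinset v
  omega

end SimpleGraph

lemma card_edgeSet_add_degree_eq_of_iso_deleteVert {V W : Type*} [Fintype V] [Fintype W]
    {F : SimpleGraph V} {G : SimpleGraph W} [DecidableRel F.Adj] [DecidableRel G.Adj] {v : V}
    {w : W} (e : deleteVert F v ≃g deleteVert G w) :
    Nat.card F.edgeSet + G.degree w = Nat.card G.edgeSet + F.degree v := by
  have := Nat.card_congr e.mapEdgeSet
  have := card_edgeSet_deleteVert_add_degree (G := F) v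
  have := card_edgeSet_deleteVert_add_degree (G := G) w
  omega

namespace Unicyclic

variable {V : Type*} {G : SimpleGraph V}

theorem card_connectedComponent_add_card_edgeSet [Finite V] (hG : Unicyclic G) :
    Nat.card G.ConnectedComponent + Nat.card G.edgeSet = Nat.card V + 1 := by
  obtain ⟨⟨w, c, hc⟩, huniq⟩ := hG
  obtain ⟨e, he⟩ := List.exists_mem_of_ne_nil _ (mt Walk.edges_eq_nil.mp hc.not_nil)
  cases e with | h u v
  obtain ⟨-, hr⟩ := adj_and_reachable_delete_edges_iff_exists_cycle.mpr ⟨w, c, hc, he⟩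
  -- every cycle of `G` has the edges of `c`, so deleting `s(u, v)` leaves no cycle
  have hacyc : (G.deleteEdges {s(u, v)}).IsAcyclic := fun x c' hc' => by
    have := (huniq _ _ c _ hc (hc'.mapLe (G.deleteEdges_le _)) _).mp he
    rw [Walk.edges_mapLe_eq_edges] at this
    simpa using c'.edges_subset_edgeSet this
  have hdel := hacyc.card_connectedComponent_add_card_edgeSet
  rw [card_connectedComponent_deleteEdges_of_reachable hr] at hdel
  have := card_edgeSet_deleteEdges_add_one (c.edges_subset_edgeSet he)
  omega

theorem card_edgeSet_le_card_filter_degree_ne_zero [Fintype V] [DecidableRel G.Adj]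
    (hG : Unicyclic G) : Nat.card G.edgeSet ≤ #{w | G.degree w ≠ 0} := by
  obtain ⟨u, c, hc⟩ := hG.1
  have := card_filter_degree_eq_zero_lt_card_connectedComponent (c.adj_snd hc.not_nil)
  have := hG.card_connectedComponent_add_card_edgeSet
  have := card_filter_add_card_filter_not (s := univ) (fun w => G.degree w = 0)
  rw [card_univ, ← Nat.card_eq_fintype_card] at this
  simp only [← ne_eq] at this
  omega

theorem two_mul_card_le_of_three_le_degree [Fintype V] [DecidableRel G.Adj] (hG : Unicyclic G)
    {S : Finset V} (hS : ∀ w ∈ S, 3 ≤ G.degree w) : 2 * #S ≤ Fintype.card V := by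
  have := card_filter_degree_ne_zero_add_two_mul_card_le hS
  have := hG.card_edgeSet_le_card_filter_degree_ne_zero
  have := card_le_univ ({w | G.degree w ≠ 0} : Finset V)
  omega

end Unicyclic

/-- If a forest `F` and a graph `G` with exactly one cycle, both on `n`
vertices, have at least `⌊n/2⌋ + 1` common cards, then the number of connected components
of `F` is at most the number of connected components of `G` plus one. -/
theorem stmt8 {V W : Type*} [Fintype V] [Fintype W]
    (F : SimpleGraph V) (G : SimpleGraph W)
    (n : ℕ) (hnV : Fintype.card V = n) (hnW : Fintype.card W = n)
    (hF : F.IsAcyclic) (hG : Unicyclic G)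
    (hcc : CommonCards F G (n / 2 + 1)) :
    Nat.card F.ConnectedComponent ≤ Nat.card G.ConnectedComponent + 1 := by
  classical
  obtain ⟨f, g, hfg⟩ := hcc
  have hFcard := hF.card_connectedComponent_add_card_edgeSet
  have hGcard := hG.card_connectedComponent_add_card_edgeSet
  rw [Nat.card_eq_fintype_card (α := V), hnV] at hFcard
  rw [Nat.card_eq_fintype_card (α := W), hnW] at hGcard
  suffices Nat.card G.edgeSet ≤ Nat.card F.edgeSet + 2 by omega
  by_contra! h
  have hdeg : ∀ w ∈ univ.map g, 3 ≤ G.degree w := by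
    simp only [mem_map, mem_univ, true_and, forall_exists_index, forall_apply_eq_imp_iff]
    intro i
    have := card_edgeSet_add_degree_eq_of_iso_deleteVert (hfg i).some
    omega
  have := hG.two_mul_card_le_of_three_le_degree hdeg
  rw [card_map, card_univ, Fintype.card_fin, hnW] at this
  omega
end

section
/- Let G be a connected graph and H a connected graph with v(H) < v(G)/2. Then there are at most ⌊v(G)/(v(H)+1)⌋ vertices v of G such that G − v has a connected component isomorphic to H. -/
open SimpleGraph

/-!
Call `v` good if `G - v` has a component `C_v` with `v(H)` vertices. Let `v ≠ v'` be good.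
If `v' ∈ C_v`, then `C_v` together with the component of `v` in `G - v'` covers `G`, so the latter
has at least `v(G) - v(H) > v(H)` vertices; hence `C_{v'}` avoids it and lies in `C_v \ {v'}`,
which is too small. Otherwise `v' ∉ C_v` and `v ∉ C_{v'}`, and then `C_v ∩ C_{v'}` has no edge
leaving it, so it is empty since `G` is connected. Thus the sets `{v} ∪ C_v` for good `v` are
pairwise disjoint, each of size `v(H) + 1`.
-/

namespace SimpleGraph

variable {V : Type*} {G : SimpleGraph V}

theorem Preconnected.eq_univ_of_adj_mem (hG : G.Preconnected) {S : Set V} (hS : S.Nonempty)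
    (hadj : ∀ a b, a ∈ S → G.Adj a b → b ∈ S) : S = Set.univ := by
  refine Set.eq_univ_of_forall fun b => by_contra fun hb => ?_
  obtain ⟨a, ha⟩ := hS
  obtain ⟨d, -, hd, hd'⟩ := (hG a b).some.exists_boundary_dart S ha hb
  exact hd' (hadj _ _ hd d.adj)

namespace ConnectedComponent

variable {s : Set V}

theorem mem_image_supp_of_adj {c : (G.induce s).ConnectedComponent} {a b : V}
    (ha : a ∈ Subtype.val '' c.supp) (hb : b ∈ s) (hab : G.Adj a b) :
    b ∈ Subtype.val '' c.supp := by
  obtain ⟨a, ha, rfl⟩ := ha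
  exact ⟨⟨b, hb⟩, c.mem_supp_of_adj_mem_supp ha (by simpa using hab), rfl⟩

theorem eq_of_mem_image_supp {c d : (G.induce s).ConnectedComponent} {x : V}
    (hc : x ∈ Subtype.val '' c.supp) (hd : x ∈ Subtype.val '' d.supp) : c = d := by
  obtain ⟨y, hy, rfl⟩ := hc
  obtain ⟨z, hz, hzy⟩ := hd
  rw [Subtype.ext hzy] at hz
  exact hy.symm.trans hz

end ConnectedComponent

end SimpleGraph

section DeleteVert

variable {V : Type*} {G : SimpleGraph V}

theorem notMem_image_supp_deleteVert {v : V} (c : (deleteVert G v).ConnectedComponent) :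
    v ∉ Subtype.val '' c.supp := by
  rintro ⟨y, -, hy⟩
  exact y.2 hy

theorem notMem_image_supp_deleteVert_of_ncard_eq [Finite V] (hG : G.Preconnected) {k : ℕ}
    (hk : 2 * k < Nat.card V) {v v' : V}
    {c : (deleteVert G v).ConnectedComponent} {c' : (deleteVert G v').ConnectedComponent}
    (hc : (Subtype.val '' c.supp).ncard = k) (hc' : (Subtype.val '' c'.supp).ncard = k) :
    v' ∉ Subtype.val '' c.supp := by
  intro hv'
  have hvv' : v ≠ v' := fun h => notMem_image_supp_deleteVert c (h ▸ hv')
  obtain ⟨d, hvD⟩ : ∃ d : (deleteVert G v').ConnectedComponent, v ∈ Subtype.val '' d.supp :=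
    ⟨_, ⟨v, hvv'⟩, rfl, rfl⟩
  set C := Subtype.val '' c.supp
  set D := Subtype.val '' d.supp
  have hcover : C ∪ D = Set.univ := by
    refine hG.eq_univ_of_adj_mem ⟨v, .inr hvD⟩ fun a b ha hab => ?_
    rcases ha with ha | ha
    · by_cases hb : b = v
      · exact .inr (hb ▸ hvD)
      · exact .inl (ConnectedComponent.mem_image_supp_of_adj ha hb hab)
    · by_cases hb : b = v'
      · exact .inl (hb ▸ hv')
      · exact .inr (ConnectedComponent.mem_image_supp_of_adj ha hb hab)
  have hD : Nat.card V ≤ k + D.ncard := by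
    rw [← hc, ← Set.ncard_univ, ← hcover]
    exact Set.ncard_union_le C D
  have hc'D : c' ≠ d := by
    rintro rfl
    have : D.ncard = k := hc'
    omega
  have hsub : insert v' (Subtype.val '' c'.supp) ⊆ C := by
    refine Set.insert_subset hv' fun x hx => ?_
    have hxD : x ∉ D := fun hxD => hc'D (ConnectedComponent.eq_of_mem_image_supp hx hxD)
    exact (Set.eq_univ_iff_forall.mp hcover x).resolve_right hxD
  have := Set.ncard_le_ncard hsub
  rw [Set.ncard_insert_of_notMem (notMem_image_supp_deleteVert c'), hc', hc] at this
  omega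

theorem disjoint_image_supp_deleteVert (hG : G.Preconnected) {v v' : V} (hvv' : v ≠ v')
    {c : (deleteVert G v).ConnectedComponent} {c' : (deleteVert G v').ConnectedComponent}
    (hv' : v' ∉ Subtype.val '' c.supp) (hv : v ∉ Subtype.val '' c'.supp) :
    Disjoint (Subtype.val '' c.supp) (Subtype.val '' c'.supp) := by
  rw [Set.disjoint_iff_inter_eq_empty, ← Set.not_nonempty_iff_eq_empty]
  intro hne
  have hcap : Subtype.val '' c.supp ∩ Subtype.val '' c'.supp = Set.univ := by
    refine hG.eq_univ_of_adj_mem hne fun a b ⟨ha, ha'⟩ hab => ?_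
    have hbv : b ≠ v := by
      rintro rfl
      exact hv (ConnectedComponent.mem_image_supp_of_adj ha' hvv' hab)
    have hbv' : b ≠ v' := by
      rintro rfl
      exact hv' (ConnectedComponent.mem_image_supp_of_adj ha hvv'.symm hab)
    exact ⟨ConnectedComponent.mem_image_supp_of_adj ha hbv hab,
      ConnectedComponent.mem_image_supp_of_adj ha' hbv' hab⟩
  exact notMem_image_supp_deleteVert c (hcap.symm ▸ Set.mem_univ v).1

theorem disjoint_insert_image_supp_deleteVert [Finite V] (hG : G.Preconnected) {k : ℕ}
    (hk : 2 * k < Nat.card V) {v v' : V} (hvv' : v ≠ v')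
    {c : (deleteVert G v).ConnectedComponent} {c' : (deleteVert G v').ConnectedComponent}
    (hc : (Subtype.val '' c.supp).ncard = k) (hc' : (Subtype.val '' c'.supp).ncard = k) :
    Disjoint (insert v (Subtype.val '' c.supp)) (insert v' (Subtype.val '' c'.supp)) := by
  have hv' := notMem_image_supp_deleteVert_of_ncard_eq hG hk hc hc'
  have hv := notMem_image_supp_deleteVert_of_ncard_eq hG hk hc' hc
  simp only [Set.disjoint_insert_left, Set.disjoint_insert_right, Set.mem_insert_iff, not_or]
  exact ⟨⟨hvv'.symm, hv'⟩, hv, disjoint_image_supp_deleteVert hG hvv' hv' hv⟩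

end DeleteVert

theorem ncard_image_val_eq_of_iso {V W : Type*} {p : V → Prop} {K : SimpleGraph (Subtype p)}
    {t : Set (Subtype p)} {H : SimpleGraph W} (e : K.induce t ≃g H) :
    (Subtype.val '' t).ncard = Nat.card W := by
  rw [Set.ncard_image_of_injective _ Subtype.val_injective, ← Nat.card_coe_set_eq,
    Nat.card_congr e.toEquiv]

theorem stmt10_general {V W : Type*} [Fintype V] [Fintype W]
    (G : SimpleGraph V) (H : SimpleGraph W)
    (hG : G.Connected)
    (hsize : 2 * Fintype.card W < Fintype.card V) :
    {v : V | ∃ c : (deleteVert G v).ConnectedComponent,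
        Nonempty ((deleteVert G v).induce c.supp ≃g H)}.ncard ≤
      Fintype.card V / (Fintype.card W + 1) := by
  classical
  simp only [← Nat.card_eq_fintype_card] at hsize ⊢
  rw [Set.ncard_eq_toFinset_card', Nat.le_div_iff_mul_le (Nat.succ_pos _)]
  let r : V → V → Prop := fun v x => ∃ c : (deleteVert G v).ConnectedComponent,
    Nonempty ((deleteVert G v).induce c.supp ≃g H) ∧ x ∈ insert v (Subtype.val '' c.supp)
  calc _ ≤ (Finset.univ : Finset V).card * 1 := Finset.card_mul_le_card_mul r ?_ ?_
    _ = Nat.card V := by simp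
  · rintro v hv
    obtain ⟨c, ⟨e⟩⟩ := Set.mem_toFinset.mp hv
    calc Nat.card W + 1 = (insert v (Subtype.val '' c.supp)).ncard := by
          rw [Set.ncard_insert_of_notMem (notMem_image_supp_deleteVert c),
            ncard_image_val_eq_of_iso e]
      _ ≤ _ := by
          rw [← Set.ncard_coe_finset]
          exact Set.ncard_le_ncard fun x hx => by simpa using ⟨c, ⟨e⟩, hx⟩
  · refine fun x _ => Finset.card_le_one.mpr fun v hv v' hv' => by_contra fun hvv' => ?_
    obtain ⟨-, c, ⟨e⟩, hx⟩ := (Finset.mem_bipartiteBelow r).mp hv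
    obtain ⟨-, c', ⟨e'⟩, hx'⟩ := (Finset.mem_bipartiteBelow r).mp hv'
    exact Set.disjoint_left.mp (disjoint_insert_image_supp_deleteVert hG.preconnected hsize hvv'
      (ncard_image_val_eq_of_iso e) (ncard_image_val_eq_of_iso e')) hx hx'

/-- If `G` and `H` are connected graphs with `v(H) < v(G)/2`, then at most
`⌊v(G)/(v(H)+1)⌋` vertices `v` of `G` are such that `G - v` has a connected component
isomorphic to `H`. -/
theorem stmt10 {V W : Type*} [Fintype V] [Fintype W]
    (G : SimpleGraph V) (H : SimpleGraph W)
    (hG : G.Connected) (hH : H.Connected)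
    (hsize : 2 * Fintype.card W < Fintype.card V) :
    {v : V | ∃ c : (deleteVert G v).ConnectedComponent,
        Nonempty ((deleteVert G v).induce c.supp ≃g H)}.ncard ≤
      Fintype.card V / (Fintype.card W + 1) :=
  stmt10_general G H hG hsize
end

section
/- Let G be a connected graph and let k be an integer with 1 ≤ k < v(G)/2. Then there are at most ⌊v(G)/(k+1)⌋ vertices v of G such that G − v has a connected component with exactly k vertices. -/
open SimpleGraph

/-!
For each vertex `v` counted, pick a component `C_v` of `G - v` with `k` vertices and put
`D_v = {v} ∪ C_v`, a set of `k + 1` vertices. The sets `D_v` are pairwise disjoint.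
First, `u ∉ C_v`: otherwise the component of `G - u` through `v` contains all `v(G) - k > k`
vertices outside `C_v`, and every other component of `G - u` lies in `C_v \ {u}`.
Second, if `u ∉ C_v` and `v ∉ C_u` then `C_v ∩ C_u = ∅`: an edge of `G` leaving `C_v ∩ C_u`
would have to end at both `v` and `u`.
-/

open scoped Function

section AmbientSupp

variable {V : Type*} {p : V → Prop} {H : SimpleGraph (Subtype p)}

def ambientSupp (c : H.ConnectedComponent) : Set V :=
  Subtype.val '' c.supp

lemma mem_ambientSupp_iff {c : H.ConnectedComponent} {x : V} :
    x ∈ ambientSupp c ↔ ∃ hx : p x, H.connectedComponentMk ⟨x, hx⟩ = c := by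
  simp [ambientSupp, ConnectedComponent.mem_supp_iff]

lemma eq_of_mem_ambientSupp {c c' : H.ConnectedComponent} {x : V}
    (hc : x ∈ ambientSupp c) (hc' : x ∈ ambientSupp c') : c = c' := by
  obtain ⟨hx, rfl⟩ := mem_ambientSupp_iff.mp hc
  obtain ⟨-, rfl⟩ := mem_ambientSupp_iff.mp hc'
  rfl

lemma ncard_ambientSupp (c : H.ConnectedComponent) :
    (ambientSupp c).ncard = Nat.card c.supp := by
  rw [ambientSupp, Set.ncard_image_of_injective _ Subtype.val_injective, Nat.card_coe_set_eq]

end AmbientSupp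

lemma reachable_induce_compl_of_forall_adj {V : Type*} {G : SimpleGraph V} {C : Set V} {x v : V}
    (hC : ∀ a ∈ C, ∀ b, G.Adj a b → b ≠ v → b ∈ C) (hv : v ∉ C) (p : G.Walk x v) (hx : x ∉ C) :
    (G.induce Cᶜ).Reachable ⟨x, hx⟩ ⟨v, hv⟩ := by
  induction p with
  | nil => rfl
  | @cons x y v hxy p ih =>
    by_cases hxv : x = v
    · subst hxv; rfl
    have hy : y ∉ C := fun hy => hx (hC y hy x hxy.symm hxv)
    exact (show (G.induce Cᶜ).Adj ⟨x, hx⟩ ⟨y, hy⟩ from hxy).reachable.trans (ih hC hv hy)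

lemma Nat.card_mul_le_of_pairwise_disjoint {ι α : Type*} [Finite ι] [Finite α] {D : ι → Set α}
    {m : ℕ} (hm : ∀ i, (D i).ncard = m) (hD : Pairwise (Disjoint on D)) :
    Nat.card ι * m ≤ Nat.card α := by
  have := Fintype.ofFinite ι
  calc Nat.card ι * m = ∑ᶠ i, (D i).ncard := by
        simp [hm, finsum_eq_sum_of_fintype, Nat.card_eq_fintype_card]
    _ = (⋃ i, D i).ncard := (Set.ncard_iUnion_of_finite (fun _ => Set.toFinite _) hD).symm
    _ ≤ Nat.card α := Set.ncard_le_card _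

section DeleteVert

variable {V : Type*} {G : SimpleGraph V} {u v : V}

lemma notMem_ambientSupp_deleteVert (c : (deleteVert G v).ConnectedComponent) :
    v ∉ ambientSupp c := by
  rintro ⟨⟨w, hw⟩, -, hwv⟩
  exact hw hwv

lemma mem_ambientSupp_deleteVert_of_adj {c : (deleteVert G v).ConnectedComponent} {x y : V}
    (hx : x ∈ ambientSupp c) (hxy : G.Adj x y) (hy : y ≠ v) : y ∈ ambientSupp c := by
  obtain ⟨hxv, rfl⟩ := mem_ambientSupp_iff.mp hx
  have hadj : (deleteVert G v).Adj ⟨y, hy⟩ ⟨x, hxv⟩ := hxy.symm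
  exact mem_ambientSupp_iff.mpr ⟨hy, ConnectedComponent.sound hadj.reachable⟩

lemma compl_ambientSupp_subset (hG : G.Connected) {c : (deleteVert G v).ConnectedComponent}
    (hu : u ∈ ambientSupp c) (huv : u ≠ v) :
    (ambientSupp c)ᶜ ⊆ ambientSupp ((deleteVert G u).connectedComponentMk ⟨v, huv.symm⟩) := by
  intro x hx
  obtain ⟨p⟩ := hG.preconnected x v
  have hxv := reachable_induce_compl_of_forall_adj
    (fun a ha b hab hbv => mem_ambientSupp_deleteVert_of_adj ha hab hbv)
    (notMem_ambientSupp_deleteVert c) p hx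
  have hsub : (ambientSupp c)ᶜ ⊆ {w | w ≠ u} := fun y hy (hyu : y = u) => hy (hyu ▸ hu)
  have hvx : (deleteVert G u).Reachable ⟨v, huv.symm⟩ ⟨x, hsub hx⟩ :=
    hxv.symm.map (G.induceHomOfLE hsub).toHom
  exact mem_ambientSupp_iff.mpr ⟨hsub hx, (ConnectedComponent.sound hvx).symm⟩

lemma card_supp_ne_of_mem_ambientSupp [Fintype V] (hG : G.Connected) {k : ℕ}
    (hk : 2 * k < Fintype.card V) {c : (deleteVert G v).ConnectedComponent}
    (hc : Nat.card c.supp = k) (hu : u ∈ ambientSupp c)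
    (c' : (deleteVert G u).ConnectedComponent) :
    Nat.card c'.supp ≠ k := by
  have huv : u ≠ v := fun h => notMem_ambientSupp_deleteVert c (h ▸ hu)
  rw [← ncard_ambientSupp] at hc ⊢
  have hcompl := compl_ambientSupp_subset hG hu huv
  by_cases hc' : c' = (deleteVert G u).connectedComponentMk ⟨v, huv.symm⟩
  · have h := Set.ncard_le_ncard (hc' ▸ hcompl) (Set.toFinite _)
    have := Set.ncard_add_ncard_compl (ambientSupp c)
    rw [Nat.card_eq_fintype_card] at this
    omega
  · have hsub : ambientSupp c' ⊆ ambientSupp c \ {u} := by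
      intro x hx
      refine ⟨?_, fun (hxu : x = u) => notMem_ambientSupp_deleteVert c' (hxu ▸ hx)⟩
      by_contra hxc
      exact hc' (eq_of_mem_ambientSupp hx (hcompl hxc))
    have h := Set.ncard_le_ncard hsub (Set.toFinite _)
    rw [Set.ncard_sdiff_singleton_of_mem hu] at h
    have := (Set.ncard_pos (Set.toFinite _)).mpr ⟨u, hu⟩
    omega

lemma disjoint_ambientSupp (hG : G.Connected) {c : (deleteVert G v).ConnectedComponent}
    {c' : (deleteVert G u).ConnectedComponent} (huv : u ≠ v) (hu : u ∉ ambientSupp c)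
    (hv : v ∉ ambientSupp c') : Disjoint (ambientSupp c) (ambientSupp c') := by
  rw [Set.disjoint_iff_inter_eq_empty, ← Set.not_nonempty_iff_eq_empty]
  rintro ⟨w, hw⟩
  obtain ⟨p⟩ := hG.preconnected w v
  obtain ⟨d, -, ⟨hc, hc'⟩, hd⟩ :=
    p.exists_boundary_dart _ hw fun h => notMem_ambientSupp_deleteVert c h.1
  by_cases hdc : d.snd ∈ ambientSupp c
  · have hdu : d.snd = u := by
      by_contra hdu
      exact hd ⟨hdc, mem_ambientSupp_deleteVert_of_adj hc' d.adj hdu⟩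
    exact hu (hdu ▸ hdc)
  · have hdv : d.snd = v := by
      by_contra hdv
      exact hdc (mem_ambientSupp_deleteVert_of_adj hc d.adj hdv)
    exact hv (hdv ▸ mem_ambientSupp_deleteVert_of_adj hc' d.adj (hdv ▸ huv.symm))

end DeleteVert

theorem stmt11_general {V : Type*} [Fintype V] (G : SimpleGraph V) (hG : G.Connected)
    (k : ℕ) (hk2 : 2 * k < Fintype.card V) :
    {v : V | ∃ c : (deleteVert G v).ConnectedComponent, Nat.card c.supp = k}.ncard ≤
      Fintype.card V / (k + 1) := by
  set S := {v : V | ∃ c : (deleteVert G v).ConnectedComponent, Nat.card c.supp = k}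
  choose c hc using fun v : S => v.2
  have hnotMem (u v : S) : (u : V) ∉ ambientSupp (c v) :=
    fun hu => card_supp_ne_of_mem_ambientSupp hG hk2 (hc v) hu (c u) (hc u)
  set D : S → Set V := fun v => insert (v : V) (ambientSupp (c v))
  have hcard (v : S) : (D v).ncard = k + 1 := by
    rw [Set.ncard_insert_of_notMem (notMem_ambientSupp_deleteVert _), ncard_ambientSupp, hc]
  have hdisj : Pairwise (Disjoint on D) := by
    intro u v huv
    have huv' : (u : V) ≠ v := Subtype.coe_ne_coe.mpr huv
    rw [Function.onFun, Set.disjoint_insert_left, Set.disjoint_insert_right, Set.mem_insert_iff,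
      not_or]
    exact ⟨⟨huv', hnotMem u v⟩, hnotMem v u,
      disjoint_ambientSupp hG huv'.symm (hnotMem v u) (hnotMem u v)⟩
  have hmul := Nat.card_mul_le_of_pairwise_disjoint hcard hdisj
  rw [Nat.card_coe_set_eq, Nat.card_eq_fintype_card] at hmul
  exact (Nat.le_div_iff_mul_le k.succ_pos).mpr hmul

/-- If `G` is a connected graph and `1 ≤ k < v(G)/2`, then at most
`⌊v(G)/(k+1)⌋` vertices `v` of `G` are such that `G - v` has a connected component with
exactly `k` vertices. -/
theorem stmt11 {V : Type*} [Fintype V] (G : SimpleGraph V) (hG : G.Connected)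
    (k : ℕ) (hk1 : 1 ≤ k) (hk2 : 2 * k < Fintype.card V) :
    {v : V | ∃ c : (deleteVert G v).ConnectedComponent, Nat.card c.supp = k}.ncard ≤
      Fintype.card V / (k + 1) :=
  stmt11_general G hG k hk2
end

section
/- For every integer k ≥ 2 and n = v(G), there exists a connected graph G on n vertices with exactly ⌊n/(k+1)⌋ vertices v such that G − v contains a connected component of size exactly k (showing the bound ⌊v(G)/(k+1)⌋ is tight). -/
open SimpleGraph

/-!
Take the spider on `Fin n` with centre `0` whose legs are the blocks `[i(k+1), (i+1)(k+1))`,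
the first leg being `[1, k+1)`. Deleting the centre leaves the first leg, of size `k`, as a
component. Deleting `v ≠ 0` leaves at most two components: the part of `v`'s leg beyond `v`,
which has `k` vertices iff `v` starts a complete leg, and the rest, which has at least
`n - (k+1) ≥ k` vertices, and exactly `k` only if `v` again starts a complete leg. So the
vertices with a component of size `k` are the multiples `v` of `k+1` with `v + k < n`, and
there are `⌊n/(k+1)⌋` of them.
-/

namespace SimpleGraph

variable {V : Type*} {G : SimpleGraph V}

theorem supp_connectedComponentMk_eq_setOf {P : V → Prop} {x : V} (hx : P x)
    (hadj : ∀ a b, G.Adj a b → P a → P b) (hreach : ∀ y, P y → G.Reachable y x) :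
    (G.connectedComponentMk x).supp = {y | P y} := by
  have transport : ∀ {a b : V} (w : G.Walk a b), P a → P b := by
    intro a b w
    induction w with
    | nil => exact id
    | cons h _ ih => exact fun ha => ih (hadj _ _ h ha)
  ext y
  rw [ConnectedComponent.mem_supp_iff, ConnectedComponent.eq]
  exact ⟨fun ⟨w⟩ => transport w.reverse hx, hreach y⟩

end SimpleGraph

section ParentTree

variable {p : ℕ → ℕ} {n : ℕ}

variable (p) in
def IsAncestor (u x : ℕ) : Prop := ∃ m, p^[m] x = u

variable (p) in
def parentGraph (n : ℕ) : SimpleGraph (Fin n) := SimpleGraph.fromRel fun x y => p x = y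

variable (p) in
def subtree (n u : ℕ) : Set ℕ := {x | x < n ∧ IsAncestor p u x}

theorem IsAncestor.refl (u : ℕ) : IsAncestor p u u := ⟨0, rfl⟩

theorem IsAncestor.of_parent {u x : ℕ} (h : IsAncestor p u (p x)) : IsAncestor p u x :=
  let ⟨m, hm⟩ := h
  ⟨m + 1, hm⟩

theorem isAncestor_iff_parent {u x : ℕ} (hx : x ≠ u) :
    IsAncestor p u x ↔ IsAncestor p u (p x) := by
  refine ⟨?_, IsAncestor.of_parent⟩
  rintro ⟨_ | m, hm⟩
  · exact absurd hm hx
  · exact ⟨m, hm⟩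

theorem isAncestor_zero_right (hp0 : p 0 = 0) {u : ℕ} : IsAncestor p u 0 ↔ u = 0 := by
  refine ⟨fun ⟨m, hm⟩ => ?_, fun h => h ▸ IsAncestor.refl u⟩
  rwa [Function.iterate_fixed hp0, eq_comm] at hm

theorem ne_zero_of_parent_ne (hp0 : p 0 = 0) {u : ℕ} (hu : p u ≠ u) : u ≠ 0 := by
  rintro rfl
  exact hu hp0

theorem parent_le (hp0 : p 0 = 0) (hp : ∀ x ≠ 0, p x < x) (x : ℕ) : p x ≤ x := by
  rcases eq_or_ne x 0 with rfl | hx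
  · exact hp0.le
  · exact (hp x hx).le

theorem IsAncestor.le (hp0 : p 0 = 0) (hp : ∀ x ≠ 0, p x < x) {u x : ℕ}
    (h : IsAncestor p u x) : u ≤ x := by
  obtain ⟨m, rfl⟩ := h
  induction m generalizing x with
  | zero => exact le_rfl
  | succ m ih => exact (ih (x := p x)).trans (parent_le hp0 hp x)

theorem zero_isAncestor (hp : ∀ x ≠ 0, p x < x) (x : ℕ) : IsAncestor p 0 x := by
  induction x using Nat.strong_induction_on with
  | _ x ih =>
    rcases eq_or_ne x 0 with rfl | hx
    · exact IsAncestor.refl 0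
    · exact (ih (p x) (hp x hx)).of_parent

theorem IsAncestor.exists_child {v x : ℕ} (h : IsAncestor p v x) (hx : x ≠ v) :
    ∃ u, p u = v ∧ u ≠ v ∧ IsAncestor p u x := by
  obtain ⟨m, hm⟩ := h
  induction m generalizing x with
  | zero => exact absurd hm hx
  | succ m ih =>
    by_cases hpx : p x = v
    · exact ⟨x, hpx, hx, IsAncestor.refl x⟩
    · obtain ⟨u, hu, huv, hux⟩ := ih hpx hm
      exact ⟨u, hu, huv, hux.of_parent⟩

theorem parentGraph_adj {x y : Fin n} :
    (parentGraph p n).Adj x y ↔ x ≠ y ∧ (p x = y ∨ p y = x) := by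
  simp [parentGraph]

theorem parentGraph_connected (hp : ∀ x ≠ 0, p x < x) (hn : 0 < n) :
    (parentGraph p n).Connected := by
  have reach_zero : ∀ x : Fin n, (parentGraph p n).Reachable x ⟨0, hn⟩ := by
    rintro ⟨x, hxn⟩
    induction x using Nat.strong_induction_on with
    | _ x ih =>
      rcases eq_or_ne x 0 with rfl | hx
      · rfl
      · have hpx := hp x hx
        have hadj : (parentGraph p n).Adj ⟨x, hxn⟩ ⟨p x, hpx.trans hxn⟩ :=
          parentGraph_adj.mpr ⟨by simp [Fin.ext_iff, hpx.ne'], Or.inl rfl⟩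
        exact hadj.reachable.trans (ih _ hpx _)
  exact (connected_iff _).mpr
    ⟨fun x y => (reach_zero x).trans (reach_zero y).symm, ⟨⟨0, hn⟩⟩⟩

end ParentTree

section Deletion

variable {p : ℕ → ℕ} {n : ℕ} {v : Fin n}

theorem val_val_ne (x : {w : Fin n // w ≠ v}) : (x : ℕ) ≠ v :=
  fun h => x.2 (Fin.ext h)

theorem natCard_setOf_deleteVert (P : ℕ → Prop) :
    Nat.card {x : {w : Fin n // w ≠ v} | P x} = {x | x < n ∧ x ≠ v ∧ P x}.ncard := by
  have hinj : Function.Injective fun x : {w : Fin n // w ≠ v} => (x : ℕ) :=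
    Fin.val_injective.comp Subtype.val_injective
  rw [Nat.card_coe_set_eq, ← Set.ncard_image_of_injective _ hinj]
  congr 1
  ext x
  constructor
  · rintro ⟨y, hy, rfl⟩
    exact ⟨y.1.2, val_val_ne y, hy⟩
  · rintro ⟨hxn, hxv, hx⟩
    exact ⟨⟨⟨x, hxn⟩, fun h => hxv (congrArg Fin.val h)⟩, hx, rfl⟩

theorem reachable_deleteVert_of_isAncestor (hp0 : p 0 = 0) (hp : ∀ x ≠ 0, p x < x)
    {x y : {w : Fin n // w ≠ v}} (h : IsAncestor p y x)
    (hv : ∀ z, IsAncestor p z x → IsAncestor p y z → z ≠ v) :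
    (deleteVert (parentGraph p n) v).Reachable x y := by
  obtain ⟨m, hm⟩ := h
  induction m generalizing x with
  | zero => exact Subtype.ext (Fin.ext hm) ▸ Reachable.refl x
  | succ m ih =>
    by_cases hxy : x = y
    · exact hxy ▸ Reachable.refl x
    have hx0 : (x : ℕ) ≠ 0 := by
      intro hx0
      have hy0 : IsAncestor p y 0 := hx0 ▸ ⟨m + 1, hm⟩
      exact hxy (Subtype.ext (Fin.ext (hx0.trans ((isAncestor_zero_right hp0).mp hy0).symm)))
    have hpx := hp _ hx0
    let z : {w : Fin n // w ≠ v} :=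
      ⟨⟨p x, hpx.trans x.1.2⟩, fun h => hv (p x) ⟨1, rfl⟩ ⟨m, hm⟩ (congrArg Fin.val h)⟩
    have hxz : (deleteVert (parentGraph p n) v).Adj x z :=
      parentGraph_adj.mpr ⟨fun h => hpx.ne (congrArg Fin.val h).symm, Or.inl rfl⟩
    exact hxz.reachable.trans (ih (fun w hw hyw => hv w (IsAncestor.of_parent hw) hyw) hm)

theorem isAncestor_iff_of_parent_eq {u a b : ℕ} (hab : p a = b) (ha : a ≠ v) (hb : b ≠ v)
    (hv : (v : ℕ) = u ∨ (v : ℕ) = p u) : IsAncestor p u a ↔ IsAncestor p u b := by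
  subst hab
  refine isAncestor_iff_parent fun hau => ?_
  subst hau
  rcases hv with hv | hv
  · exact ha hv.symm
  · exact hb hv.symm

theorem isAncestor_iff_of_adj_deleteVert {u : ℕ} (hv : (v : ℕ) = u ∨ (v : ℕ) = p u)
    {a b : {w : Fin n // w ≠ v}} (h : (deleteVert (parentGraph p n) v).Adj a b) :
    IsAncestor p u a ↔ IsAncestor p u b := by
  rcases (parentGraph_adj.mp h).2 with hab | hba
  · exact isAncestor_iff_of_parent_eq hab (val_val_ne a) (val_val_ne b) hv
  · exact (isAncestor_iff_of_parent_eq hba (val_val_ne b) (val_val_ne a) hv).symm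

theorem supp_deleteVert_parentGraph_zero (hp0 : p 0 = 0) (hp : ∀ x ≠ 0, p x < x)
    (hn : 0 < n) (hv : (v : ℕ) ≠ 0) :
    ((deleteVert (parentGraph p n) v).connectedComponentMk
      ⟨⟨0, hn⟩, fun h => hv (congrArg Fin.val h).symm⟩).supp =
      {x : {w : Fin n // w ≠ v} | ¬ IsAncestor p v x} := by
  refine supp_connectedComponentMk_eq_setOf (mt (isAncestor_zero_right hp0).mp hv)
    (fun a b h => mt (isAncestor_iff_of_adj_deleteVert (Or.inl rfl) h).mpr)
    fun y hy => reachable_deleteVert_of_isAncestor hp0 hp (zero_isAncestor hp _) ?_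
  rintro z hz - rfl
  exact hy hz

theorem supp_deleteVert_parentGraph_child (hp0 : p 0 = 0) (hp : ∀ x ≠ 0, p x < x)
    (u : {w : Fin n // w ≠ v}) (hu : p u = v) :
    ((deleteVert (parentGraph p n) v).connectedComponentMk u).supp =
      {x : {w : Fin n // w ≠ v} | IsAncestor p u x} := by
  have hu0 : (u : ℕ) ≠ 0 := ne_zero_of_parent_ne hp0 (hu ▸ (val_val_ne u).symm)
  refine supp_connectedComponentMk_eq_setOf (IsAncestor.refl _)
    (fun a b h => (isAncestor_iff_of_adj_deleteVert (Or.inr hu.symm) h).mp)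
    fun y hy => reachable_deleteVert_of_isAncestor hp0 hp hy ?_
  rintro z - huz rfl
  exact (hp _ hu0).not_ge (hu ▸ huz.le hp0 hp)

theorem natCard_supp_deleteVert_parentGraph_child (hp0 : p 0 = 0) (hp : ∀ x ≠ 0, p x < x)
    (u : {w : Fin n // w ≠ v}) (hu : p u = v) :
    Nat.card ((deleteVert (parentGraph p n) v).connectedComponentMk u).supp =
      (subtree p n u).ncard := by
  have hu0 : (u : ℕ) ≠ 0 := ne_zero_of_parent_ne hp0 (hu ▸ (val_val_ne u).symm)
  rw [supp_deleteVert_parentGraph_child hp0 hp u hu,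
    natCard_setOf_deleteVert fun y => IsAncestor p u y]
  congr 1
  ext y
  refine ⟨fun ⟨hyn, _, hy⟩ => ⟨hyn, hy⟩, fun ⟨hyn, hy⟩ => ⟨hyn, ?_, hy⟩⟩
  rintro rfl
  exact (hp u hu0).not_ge (hu ▸ hy.le hp0 hp)

theorem natCard_supp_deleteVert_parentGraph_zero (hp0 : p 0 = 0) (hp : ∀ x ≠ 0, p x < x)
    (hn : 0 < n) (hv : (v : ℕ) ≠ 0) :
    Nat.card ((deleteVert (parentGraph p n) v).connectedComponentMk
      ⟨⟨0, hn⟩, fun h => hv (congrArg Fin.val h).symm⟩).supp =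
      n - (subtree p n v).ncard := by
  have hsub : subtree p n v ⊆ Set.Iio n := fun y hy => hy.1
  have hcard := Set.ncard_sdiff hsub ((Set.finite_Iio n).subset hsub)
  rw [Set.ncard_Iio_nat] at hcard
  rw [supp_deleteVert_parentGraph_zero hp0 hp hn hv,
    natCard_setOf_deleteVert fun y => ¬ IsAncestor p v y, ← hcard]
  congr 1
  ext y
  refine ⟨fun ⟨hyn, _, hy⟩ => ⟨hyn, fun h => hy h.2⟩, fun ⟨hyn, hy⟩ => ⟨hyn, ?_, ?_⟩⟩
  · rintro rfl
    exact hy ⟨hyn, IsAncestor.refl _⟩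
  · exact fun h => hy ⟨hyn, h⟩

theorem natCard_supp_deleteVert_parentGraph_cases (hp0 : p 0 = 0) (hp : ∀ x ≠ 0, p x < x)
    (c : (deleteVert (parentGraph p n) v).ConnectedComponent) :
    ((v : ℕ) ≠ 0 ∧ Nat.card c.supp = n - (subtree p n v).ncard) ∨
      ∃ u ≠ 0, p u = v ∧ Nat.card c.supp = (subtree p n u).ncard := by
  induction c using ConnectedComponent.ind with | h x => ?_
  by_cases hx : IsAncestor p v x
  · obtain ⟨u, hu, huv, hux⟩ := hx.exists_child (val_val_ne x)
    let u' : {w : Fin n // w ≠ v} :=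
      ⟨⟨u, (hux.le hp0 hp).trans_lt x.1.2⟩, fun h => huv (congrArg Fin.val h)⟩
    have hxu := (ConnectedComponent.mem_supp_iff _ x).mp
      (by rw [supp_deleteVert_parentGraph_child hp0 hp u' hu]; exact hux)
    refine Or.inr ⟨u, ne_zero_of_parent_ne hp0 (hu ▸ huv.symm), hu, ?_⟩
    rw [hxu, natCard_supp_deleteVert_parentGraph_child hp0 hp u' hu]
  · have hv0 : (v : ℕ) ≠ 0 := fun h => hx (h ▸ zero_isAncestor hp _)
    have hx0 := (ConnectedComponent.mem_supp_iff _ x).mp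
      (by rw [supp_deleteVert_parentGraph_zero hp0 hp x.1.pos hv0]; exact hx)
    exact Or.inl ⟨hv0, by rw [hx0, natCard_supp_deleteVert_parentGraph_zero hp0 hp]⟩

end Deletion

section Spider

variable {K : ℕ}

def spiderParent (K x : ℕ) : ℕ := if K ∣ x then 0 else x - 1

theorem spiderParent_zero : spiderParent K 0 = 0 := by simp [spiderParent]

theorem spiderParent_lt {x : ℕ} (hx : x ≠ 0) : spiderParent K x < x := by
  unfold spiderParent; split_ifs <;> omega

theorem div_add_one_mul_le_of_dvd (hK : 0 < K) {u x : ℕ} (hx : K ∣ x) (hux : u < x) :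
    (u / K + 1) * K ≤ x := by
  obtain ⟨j, rfl⟩ := hx
  have : u / K < j := (Nat.div_lt_iff_lt_mul hK).mpr (by rwa [mul_comm])
  rw [mul_comm K]
  exact Nat.mul_le_mul_right K this

/-- `(u / K + 1) * K` is the first multiple of `K` above `u`, where the leg of `u` ends. -/
theorem isAncestor_spiderParent_iff (hK : 0 < K) {u : ℕ} (hu : u ≠ 0) (x : ℕ) :
    IsAncestor (spiderParent K) u x ↔ u ≤ x ∧ x < (u / K + 1) * K := by
  have hu_lt : u < (u / K + 1) * K := by
    have := Nat.div_add_mod u K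
    have := Nat.mod_lt u hK
    have : (u / K + 1) * K = K * (u / K) + K := by ring
    omega
  induction x using Nat.strong_induction_on with
  | _ x ih =>
    rcases eq_or_ne x u with rfl | hxu
    · exact ⟨fun _ => ⟨le_rfl, hu_lt⟩, fun _ => IsAncestor.refl _⟩
    rw [isAncestor_iff_parent hxu]
    by_cases hKx : K ∣ x
    · rw [spiderParent, if_pos hKx, isAncestor_zero_right spiderParent_zero, iff_false_left hu]
      rintro ⟨hux, hxE⟩
      exact hxE.not_ge (div_add_one_mul_le_of_dvd hK hKx (lt_of_le_of_ne hux hxu.symm))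
    · have hx0 : x ≠ 0 := by rintro rfl; exact hKx (dvd_zero K)
      have hxE : x ≠ (u / K + 1) * K := fun h => hKx (h ▸ dvd_mul_left _ _)
      have hx1 : x - 1 < x := by omega
      rw [spiderParent, if_neg hKx]
      refine (ih (x - 1) hx1).trans ?_
      omega

theorem ncard_subtree_spiderParent (hK : 0 < K) {n u : ℕ} (hu : u ≠ 0) :
    (subtree (spiderParent K) n u).ncard = min n ((u / K + 1) * K) - u := by
  have : subtree (spiderParent K) n u = Set.Ico u (min n ((u / K + 1) * K)) := by
    ext x
    simp only [subtree, isAncestor_spiderParent_iff hK hu, Set.mem_ofPred_eq, Set.mem_Ico,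
      lt_min_iff]
    tauto
  rw [this, Set.ncard_Ico_nat]

end Spider

theorem spider_exists_natCard_supp_eq_iff {k n : ℕ} (hk : k ≠ 0) (hkn : 2 * k < n) (v : Fin n) :
    (∃ c : (deleteVert (parentGraph (spiderParent (k + 1)) n) v).ConnectedComponent,
        Nat.card c.supp = k) ↔ (k + 1) ∣ (v : ℕ) ∧ (v : ℕ) + k < n := by
  have hK : 0 < k + 1 := k.succ_pos
  have hp : ∀ x ≠ 0, spiderParent (k + 1) x < x := fun x hx => spiderParent_lt hx
  have hdiv := Nat.div_add_mod (v : ℕ) (k + 1)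
  have hmod := Nat.mod_lt (v : ℕ) hK
  have hE : ((v : ℕ) / (k + 1) + 1) * (k + 1) = (k + 1) * ((v : ℕ) / (k + 1)) + (k + 1) := by
    ring
  rw [Nat.dvd_iff_mod_eq_zero]
  constructor
  · rintro ⟨c, hc⟩
    rcases natCard_supp_deleteVert_parentGraph_cases spiderParent_zero hp c with
      ⟨hv0, hcard⟩ | ⟨u, hu0, hu, hcard⟩
    · rw [ncard_subtree_spiderParent hK hv0] at hcard
      omega
    · rcases eq_or_ne (v : ℕ) 0 with hv0 | hv0
      · rw [hv0]
        exact ⟨Nat.zero_mod _, by omega⟩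
      have hKu : ¬ (k + 1) ∣ u := fun h => hv0 (by rw [← hu, spiderParent, if_pos h])
      obtain rfl : u = v + 1 := by rw [spiderParent, if_neg hKu] at hu; omega
      rw [ncard_subtree_spiderParent hK hu0, Nat.succ_div_of_not_dvd hKu] at hcard
      omega
  · rintro ⟨hKv, hvk⟩
    have hKv1 : ¬ (k + 1) ∣ (v : ℕ) + 1 := by
      rw [Nat.dvd_add_right (Nat.dvd_of_mod_eq_zero hKv), Nat.dvd_one]
      omega
    let u : {w : Fin n // w ≠ v} := ⟨⟨v + 1, by omega⟩, fun h => by simp [Fin.ext_iff] at h⟩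
    have hu : spiderParent (k + 1) u = v := by simp [u, spiderParent, hKv1]
    refine ⟨_, (natCard_supp_deleteVert_parentGraph_child spiderParent_zero hp u hu).trans ?_⟩
    rw [ncard_subtree_spiderParent hK (Nat.succ_ne_zero (v : ℕ)), Nat.succ_div_of_not_dvd hKv1]
    omega

theorem ncard_setOf_dvd_add_lt (k n : ℕ) :
    {v : Fin n | (k + 1) ∣ (v : ℕ) ∧ (v : ℕ) + k < n}.ncard = n / (k + 1) := by
  rw [← Nat.Ioc_filter_dvd_card_eq_div, ← Set.ncard_coe_finset,
    ← Set.ncard_image_of_injective _ ((add_left_injective (k + 1)).comp Fin.val_injective)]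
  congr 1
  ext x
  simp only [Set.mem_image, Set.mem_ofPred_eq, Function.comp_apply, Finset.coe_filter,
    Finset.mem_Ioc]
  constructor
  · rintro ⟨v, ⟨hKv, hvn⟩, rfl⟩
    exact ⟨⟨by omega, by omega⟩, Nat.dvd_add_self_right.mpr hKv⟩
  · rintro ⟨⟨hx0, hxn⟩, hKx⟩
    have hKle := Nat.le_of_dvd hx0 hKx
    exact ⟨⟨x - (k + 1), by omega⟩, ⟨Nat.dvd_sub hKx dvd_rfl, by rw [Fin.val_mk]; omega⟩,
      by rw [Fin.val_mk]; omega⟩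

theorem stmt12_general (k n : ℕ) (hk : 2 ≤ k) (hkn : 2 * k < n) :
    ∃ G : SimpleGraph (Fin n), G.Connected ∧
      {v : Fin n | ∃ c : (deleteVert G v).ConnectedComponent,
        Nat.card c.supp = k}.ncard = n / (k + 1) := by
  refine ⟨parentGraph (spiderParent (k + 1)) n,
    parentGraph_connected (fun x hx => spiderParent_lt hx) (by omega), ?_⟩
  simp_rw [spider_exists_natCard_supp_eq_iff (by omega : k ≠ 0) hkn]
  exact ncard_setOf_dvd_add_lt k n

/-- For every `k ≥ 2` (with `k < n/2` and the cycle in the construction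
having at least 3 vertices), there is a connected graph `G` on `n` vertices with exactly
`⌊n/(k+1)⌋` vertices `v` such that `G - v` has a connected component of size exactly `k`;
so the bound `⌊v(G)/(k+1)⌋` is tight. -/
theorem stmt12 (k n : ℕ) (hk : 2 ≤ k) (hkn : 2 * k < n)
    (hcyc : 3 ≤ n - k * (n / (k + 1))) :
    ∃ G : SimpleGraph (Fin n), G.Connected ∧
      {v : Fin n | ∃ c : (deleteVert G v).ConnectedComponent,
        Nat.card c.supp = k}.ncard = n / (k + 1) :=
  stmt12_general k n hk hkn
end

section
/- For k ≥ 2, let F = P_k ∪ (k+1)·K_1 (a path on k vertices plus k+1 isolated vertices) and G = C_{k+1} ∪ k·K_1 (a cycle on k+1 vertices plus k isolated vertices), both on n = 2k+1 vertices. Then F and G have at least ⌊n/2⌋ + 1 = k + 1 common cards; indeed deleting any vertex of the cycle of G yields P_k ∪ k·K_1, which equals F minus any of its k+1 isolated vertices. -/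
/-!
Deleting an isolated vertex of `P_k ∪ (k+1)·K_1` leaves `P_k ∪ k·K_1`. Deleting a vertex `i` of
the cycle of `C_{k+1} ∪ k·K_1` leaves the same graph: the rotation `x ↦ x + i` of the cycle moves
`0` to `i`, and `C_{k+1} - 0` is the path `1, …, k`. Pairing the `k + 1` isolated vertices of the
first graph with the `k + 1` cycle vertices of the second gives `k + 1` common cards.
-/

open SimpleGraph

theorem Fin.val_succ_sub_succ_eq_one_iff {n : ℕ} (a b : Fin n) :
    ((a.succ - b.succ : Fin (n + 1)) : ℕ) = 1 ↔ (a : ℕ) = b + 1 := by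
  rcases le_or_gt b a with h | h
  · rw [Fin.coe_sub_iff_le.mpr (Fin.succ_le_succ_iff.mpr h), Fin.val_succ, Fin.val_succ]
    omega
  · -- wrap-around: the difference is `n + 1 + a - b ≥ 2`, as `b < n`
    rw [Fin.coe_sub_iff_lt.mpr (Fin.succ_lt_succ_iff.mpr h), Fin.val_succ, Fin.val_succ]
    have hb := b.isLt
    omega

namespace SimpleGraph

variable {V W : Type*}

def deleteVertCongr {G : SimpleGraph V} {H : SimpleGraph W} (e : G ≃g H) {v : V} {w : W}
    (h : e v = w) : deleteVert G v ≃g deleteVert H w :=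
  e.induce <| e.toEquiv.bijOn fun x => by simp [← h]

def deleteVertSumInl (G : SimpleGraph V) (H : SimpleGraph W) (v : V) :
    deleteVert (G ⊕g H) (.inl v) ≃g deleteVert G v ⊕g H where
  toEquiv := Equiv.subtypeSum.trans <| Equiv.sumCongr
    (Equiv.subtypeEquivRight fun _ => Sum.inl_injective.ne_iff)
    (Equiv.subtypeUnivEquiv fun _ => Sum.inr_ne_inl)
  map_rel_iff' := by rintro ⟨a | a, _⟩ ⟨b | b, _⟩ <;> exact Iff.rfl

def deleteVertSumInr (G : SimpleGraph V) (H : SimpleGraph W) (w : W) :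
    deleteVert (G ⊕g H) (.inr w) ≃g G ⊕g deleteVert H w where
  toEquiv := Equiv.subtypeSum.trans <| Equiv.sumCongr
    (Equiv.subtypeUnivEquiv fun _ => Sum.inl_ne_inr)
    (Equiv.subtypeEquivRight fun _ => Sum.inr_injective.ne_iff)
  map_rel_iff' := by rintro ⟨a | a, _⟩ ⟨b | b, _⟩ <;> exact Iff.rfl

def deleteVertBotIso {n : ℕ} (i : Fin (n + 1)) :
    deleteVert (⊥ : SimpleGraph (Fin (n + 1))) i ≃g (⊥ : SimpleGraph (Fin n)) where
  toEquiv := (finSuccAboveEquiv i).symm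
  map_rel_iff' := by simp [deleteVert]

def cycleGraphRotate (n : ℕ) [NeZero n] (c : Fin n) : cycleGraph n ≃g cycleGraph n where
  toEquiv := Equiv.addRight c
  map_rel_iff' := by simp [cycleGraph_adj', add_sub_add_right_eq_sub]

theorem cycleGraph_adj_succ {n : ℕ} (a b : Fin n) :
    (cycleGraph (n + 1)).Adj a.succ b.succ ↔ (pathGraph n).Adj a b := by
  rw [cycleGraph_adj', pathGraph_adj, Fin.val_succ_sub_succ_eq_one_iff,
    Fin.val_succ_sub_succ_eq_one_iff]
  omega

def pathGraphIsoDeleteVertCycleGraphZero (n : ℕ) :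
    pathGraph n ≃g deleteVert (cycleGraph (n + 1)) 0 where
  toEquiv := finSuccAboveEquiv 0
  map_rel_iff' := cycleGraph_adj_succ _ _

def pathGraphIsoDeleteVertCycleGraph {n : ℕ} (i : Fin (n + 1)) :
    pathGraph n ≃g deleteVert (cycleGraph (n + 1)) i :=
  (pathGraphIsoDeleteVertCycleGraphZero n).trans
    (deleteVertCongr (cycleGraphRotate (n + 1) i) (zero_add i))

end SimpleGraph

theorem stmt13_general (k : ℕ) :
    CommonCards (pathGraph k ⊕g (⊥ : SimpleGraph (Fin (k + 1))))
      (cycleGraph (k + 1) ⊕g (⊥ : SimpleGraph (Fin k))) (k + 1) :=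
  ⟨.inr, .inl, fun i => ⟨(deleteVertSumInr _ _ i).trans <|
    (Iso.sumCongr .refl (deleteVertBotIso i)).trans <|
      (Iso.sumCongr (pathGraphIsoDeleteVertCycleGraph i) .refl).trans (deleteVertSumInl _ _ i).symm⟩⟩

/-- For `k ≥ 2`, the forest `F = P_k ∪ (k+1)·K_1` and the unicyclic graph
`G = C_{k+1} ∪ k·K_1`, both on `n = 2k+1` vertices, have at least `⌊n/2⌋ + 1 = k + 1`
common cards. -/
theorem stmt13 (k : ℕ) (hk : 2 ≤ k) :
    CommonCards (pathGraph k ⊕g (⊥ : SimpleGraph (Fin (k + 1))))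
      (cycleGraph (k + 1) ⊕g (⊥ : SimpleGraph (Fin k))) (k + 1) :=
  stmt13_general k
end

section
/- For k ≥ 2, let F = P_{2k−1} ∪ k·K_2 and G = C_{2k} ∪ (k−1)·K_2 ∪ K_1, both on n = 4k − 1 vertices. Then F and G have at least ⌊n/2⌋ + 1 = 2k common cards: deleting any of the 2k cycle vertices of G yields P_{2k−1} ∪ (k−1)·K_2 ∪ K_1, which equals F minus an endpoint of one of the k isolated edges K_2. -/
open SimpleGraph

/-- The graph `k·K_2`: a perfect matching consisting of `k` disjoint edges. -/
def kK2 (k : ℕ) : SimpleGraph (Fin k × Fin 2) where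
  Adj x y := x.1 = y.1 ∧ x.2 ≠ y.2
  symm := by
    constructor
    rintro x y ⟨h1, h2⟩
    exact ⟨h1.symm, h2.symm⟩
  loopless := by
    constructor
    rintro x ⟨h1, h2⟩
    exact h2 rfl

namespace Stmt14Aux

variable {V W α β α' β' : Type*}

lemma deleteVert_adj {G : SimpleGraph V} {v : V} (a b : {w : V // w ≠ v}) :
    (deleteVert G v).Adj a b ↔ G.Adj a.1 b.1 := Iff.rfl

/-- Transport a vertex-deleted subgraph along an isomorphism. -/
def deleteVertCongr {G : SimpleGraph V} {H : SimpleGraph W} (φ : G ≃g H) (v : V) :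
    deleteVert G v ≃g deleteVert H (φ v) where
  toEquiv := Equiv.subtypeEquiv φ.toEquiv (fun a => (φ.toEquiv.injective.ne_iff).symm)
  map_rel_iff' := φ.map_rel_iff

def deleteVertEqCongr {G : SimpleGraph V} {v v' : V} (h : v = v') :
    deleteVert G v ≃g deleteVert G v' := by
  subst h; exact RelIso.refl _

def sumCongr {A : SimpleGraph α} {A' : SimpleGraph α'} {B : SimpleGraph β} {B' : SimpleGraph β'}
    (e1 : A ≃g A') (e2 : B ≃g B') : A ⊕g B ≃g A' ⊕g B' where
  toEquiv := Equiv.sumCongr e1.toEquiv e2.toEquiv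
  map_rel_iff' := by
    rintro (a | b) (c | d) <;> simp [e1.map_rel_iff, e2.map_rel_iff]

def deleteVertSumInl (A : SimpleGraph α) (B : SimpleGraph β) (v : α) :
    deleteVert (A ⊕g B) (Sum.inl v) ≃g (deleteVert A v ⊕g B) where
  toEquiv :=
  { toFun := fun w => match w with
      | ⟨Sum.inl a, h⟩ => Sum.inl ⟨a, fun hh => h (by rw [hh])⟩
      | ⟨Sum.inr b, _⟩ => Sum.inr b
    invFun := fun x => match x with
      | Sum.inl a => ⟨Sum.inl a.1, by simp [a.2]⟩
      | Sum.inr b => ⟨Sum.inr b, by simp⟩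
    left_inv := by rintro ⟨(a | b), h⟩ <;> rfl
    right_inv := by rintro (⟨a, ha⟩ | b) <;> rfl }
  map_rel_iff' := by
    rintro ⟨(a | b), ha⟩ ⟨(c | d), hc⟩ <;> exact Iff.rfl

def deleteVertSumInr (A : SimpleGraph α) (B : SimpleGraph β) (v : β) :
    deleteVert (A ⊕g B) (Sum.inr v) ≃g (A ⊕g deleteVert B v) where
  toEquiv :=
  { toFun := fun w => match w with
      | ⟨Sum.inl a, _⟩ => Sum.inl a
      | ⟨Sum.inr b, h⟩ => Sum.inr ⟨b, fun hh => h (by rw [hh])⟩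
    invFun := fun x => match x with
      | Sum.inl a => ⟨Sum.inl a, by simp⟩
      | Sum.inr b => ⟨Sum.inr b.1, by simp [b.2]⟩
    left_inv := by rintro ⟨(a | b), h⟩ <;> rfl
    right_inv := by rintro (a | ⟨b, hb⟩) <;> rfl }
  map_rel_iff' := by
    rintro ⟨(a | b), ha⟩ ⟨(c | d), hc⟩ <;> exact Iff.rfl

/-- Automorphism of `kK2` moving any vertex to `(0,0)`. -/
def kK2Auto {m : ℕ} (x : Fin (m+1) × Fin 2) : kK2 (m+1) ≃g kK2 (m+1) where
  toEquiv := (Equiv.swap 0 x.1).prodCongr (Equiv.swap 0 x.2)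
  map_rel_iff' := by
    rintro ⟨a1, a2⟩ ⟨b1, b2⟩
    show ((Equiv.swap 0 x.1) a1 = (Equiv.swap 0 x.1) b1 ∧
        (Equiv.swap 0 x.2) a2 ≠ (Equiv.swap 0 x.2) b2) ↔ (a1 = b1 ∧ a2 ≠ b2)
    rw [Equiv.apply_eq_iff_eq, ((Equiv.swap 0 x.2).injective.ne_iff)]

lemma kK2Auto_self {m : ℕ} (x : Fin (m+1) × Fin 2) : kK2Auto x x = (0, 0) := by
  show ((Equiv.swap 0 x.1).prodCongr (Equiv.swap 0 x.2)) x = (0, 0)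
  simp [Equiv.prodCongr_apply, Prod.map, Equiv.swap_apply_right]

def kK2Delete0 (m : ℕ) : deleteVert (kK2 (m+1)) (0, 0) ≃g (kK2 m ⊕g (⊥ : SimpleGraph (Fin 1))) where
  toEquiv :=
  { toFun := fun y =>
      if hj : y.1.1 = 0 then Sum.inr 0 else Sum.inl (y.1.1.pred hj, y.1.2)
    invFun := fun x => match x with
      | Sum.inl (j, e) => ⟨(j.succ, e), by
          intro h
          exact Fin.succ_ne_zero j (congrArg Prod.fst h)⟩
      | Sum.inr _ => ⟨((0 : Fin (m+1)), (1 : Fin 2)), by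
          intro h
          have := congrArg Prod.snd h
          simp at this⟩
    left_inv := by
      rintro ⟨⟨j, e⟩, h⟩
      by_cases hj : j = 0
      · subst hj
        have he : e = 1 := by
          have : e ≠ 0 := fun h0 => h (by rw [h0])
          omega
        subst he
        simp
      · simp [hj]
    right_inv := by
      rintro (⟨j, e⟩ | b)
      · simp [Fin.succ_ne_zero]
      · have : b = 0 := Subsingleton.elim _ _
        subst this
        simp
  }
  map_rel_iff' := by
    rintro ⟨⟨j, e⟩, h⟩ ⟨⟨j', e'⟩, h'⟩
    by_cases hj : j = 0 <;> by_cases hj' : j' = 0 <;>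
      simp only [Equiv.coe_fn_mk, hj, hj', dif_pos, dif_neg, not_false_iff]
    · subst hj; subst hj'
      have he : e = 1 := by
        have : e ≠ 0 := fun h0 => h (by rw [h0]); omega
      have he' : e' = 1 := by
        have : e' ≠ 0 := fun h0 => h' (by rw [h0]); omega
      subst he; subst he'
      constructor
      · intro hadj; exact absurd hadj (by simp [SimpleGraph.sum])
      · rintro ⟨-, h2⟩; exact absurd rfl h2
    · constructor
      · intro hadj; exact absurd hadj (by simp [SimpleGraph.sum])
      · rintro ⟨h1, -⟩; exact absurd (hj ▸ h1.symm) hj'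
    · constructor
      · intro hadj; exact absurd hadj (by simp [SimpleGraph.sum])
      · rintro ⟨h1, -⟩; exact absurd (hj' ▸ h1) hj
    · constructor
      · rintro ⟨h1, h2⟩
        exact ⟨by rwa [Fin.pred_inj] at h1, h2⟩
      · rintro ⟨h1, h2⟩
        exact ⟨by rw [Fin.pred_inj]; exact h1, h2⟩

def kK2Delete {m : ℕ} (x : Fin (m+1) × Fin 2) :
    deleteVert (kK2 (m+1)) x ≃g (kK2 m ⊕g (⊥ : SimpleGraph (Fin 1))) :=
  ((deleteVertCongr (kK2Auto x) x).trans (deleteVertEqCongr (kK2Auto_self x))).trans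
    (kK2Delete0 m)

/-- Rotation automorphism of the cycle graph. -/
def cycleRotate {n : ℕ} [NeZero n] (m : Fin n) : cycleGraph n ≃g cycleGraph n where
  toEquiv := Equiv.subRight m
  map_rel_iff' := by
    intro a b
    simp only [Equiv.subRight_apply]
    rw [cycleGraph_adj', cycleGraph_adj']
    simp only [sub_sub_sub_cancel_right]

lemma fin_sub_val_eq_one {j : ℕ} {u v : Fin (j+2)} (hu : u.val ≠ 0) (hv : v.val ≠ 0) :
    (u - v).val = 1 ↔ u.val = v.val + 1 := by
  rw [Fin.sub_def]
  show ((j+2) - v.val + u.val) % (j+2) = 1 ↔ _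
  have h1 := u.isLt
  have h2 := v.isLt
  rcases lt_or_ge ((j+2) - v.val + u.val) (j+2) with h | h
  · rw [Nat.mod_eq_of_lt h]; omega
  · rw [Nat.mod_eq_sub_mod h, Nat.mod_eq_of_lt (by omega)]; omega

set_option maxHeartbeats 1000000 in
def cycleDelete (j : ℕ) :
    deleteVert (cycleGraph (j + 2)) ⟨0, by omega⟩ ≃g pathGraph (j + 1) := by
  exact {
    toEquiv :=
    { toFun := fun w => ⟨w.1.val - 1, by have := w.1.isLt; omega⟩
      invFun := fun i => ⟨⟨i.val + 1, by have := i.isLt; omega⟩, by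
        intro h
        have := congrArg Fin.val h
        simp at this⟩
      left_inv := by
        rintro ⟨w, hw⟩
        have hw0 : w.val ≠ 0 := fun h0 => hw (Fin.ext h0)
        apply Subtype.ext
        apply Fin.ext
        simp
        omega
      right_inv := by
        intro i
        apply Fin.ext
        simp }
    map_rel_iff' := by
      rintro ⟨u, hu⟩ ⟨v, hv⟩
      have hu0 : u.val ≠ 0 := fun h0 => hu (Fin.ext h0)
      have hv0 : v.val ≠ 0 := fun h0 => hv (Fin.ext h0)
      simp only [Equiv.coe_fn_mk]
      rw [pathGraph_adj]
      show _ ↔ (cycleGraph (j+2)).Adj u v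
      rw [cycleGraph_adj']
      rw [fin_sub_val_eq_one hu0 hv0, fin_sub_val_eq_one hv0 hu0]
      have h1 := u.isLt
      have h2 := v.isLt
      simp only [Fin.val_mk] at *
      omega }

end Stmt14Aux


/-- For `k ≥ 2`, the forest `F = P_{2k-1} ∪ k·K_2` and the unicyclic graph
`G = C_{2k} ∪ (k-1)·K_2 ∪ K_1`, both on `n = 4k - 1` vertices, have at least
`⌊n/2⌋ + 1 = 2k` common cards. -/
theorem stmt14 (k : ℕ) (hk : 2 ≤ k) :
    CommonCards (pathGraph (2 * k - 1) ⊕g kK2 k)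
      (cycleGraph (2 * k) ⊕g (kK2 (k - 1) ⊕g (⊥ : SimpleGraph (Fin 1)))) (2 * k) := by
  obtain ⟨m, rfl⟩ : ∃ m, k = m + 1 := ⟨k - 1, by omega⟩
  haveI : NeZero (2 * (m + 1)) := ⟨by omega⟩
  let eqv : Fin (2 * (m + 1)) ≃ Fin (m + 1) × Fin 2 :=
    (finCongr (by ring)).trans finProdFinEquiv.symm
  refine ⟨⟨fun i => Sum.inr (eqv i), fun a b h => eqv.injective (Sum.inr_injective h)⟩,
    ⟨Sum.inl, fun a b h => Sum.inl_injective h⟩, fun i => ?_⟩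
  show Nonempty (deleteVert _ (Sum.inr (eqv i)) ≃g deleteVert _ (Sum.inl i))
  -- F side
  let FA := Stmt14Aux.deleteVertSumInr (pathGraph (2 * (m + 1) - 1)) (kK2 (m + 1)) (eqv i)
  let FB := Stmt14Aux.sumCongr (RelIso.refl (pathGraph (2 * (m + 1) - 1)).Adj)
    (Stmt14Aux.kK2Delete (eqv i))
  -- G side
  let c1 := Stmt14Aux.deleteVertCongr (Stmt14Aux.cycleRotate (n := 2 * (m + 1)) i) i
  have hrot : (Stmt14Aux.cycleRotate (n := 2 * (m + 1)) i) i
      = (⟨0, by omega⟩ : Fin (2 * (m + 1))) := by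
    show i - i = _
    rw [sub_self]
    exact Fin.ext (by simp)
  let c2 := Stmt14Aux.deleteVertEqCongr (G := cycleGraph (2 * (m + 1))) hrot
  let c3 : deleteVert (cycleGraph (2 * m + 2)) ⟨0, by omega⟩ ≃g pathGraph (2 * m + 1) :=
    Stmt14Aux.cycleDelete (2 * m)
  let GA := Stmt14Aux.deleteVertSumInl (cycleGraph (2 * (m + 1)))
    (kK2 ((m + 1) - 1) ⊕g (⊥ : SimpleGraph (Fin 1))) i
  let GB := Stmt14Aux.sumCongr ((c1.trans c2).trans c3)
    (RelIso.refl (kK2 ((m + 1) - 1) ⊕g (⊥ : SimpleGraph (Fin 1))).Adj)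
  exact ⟨(FA.trans FB).trans ((GA.trans GB)).symm⟩
end

section
/- Let H be a graph on n vertices with no odd cycle of length ≤ 5n/6 + 1, and let L be a shortest odd cycle of H (assumed to exist). Then every vertex v of H not on L is adjacent to at most 2 vertices of L, and if v is adjacent to two vertices w_1, w_2 of L then w_1 and w_2 are at distance exactly 2 along L. -/
open SimpleGraph

section Aux
open Walk
set_option linter.unusedSectionVars false

variable {V : Type*} [DecidableEq V] {H : SimpleGraph V}

private lemma close_isCycle {a b v : V} (P : H.Walk a b) (hP : P.IsPath) (hab : a ≠ b)
    (hv : v ∉ P.support) (h1 : H.Adj b v) (h2 : H.Adj v a) :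
    (Walk.cons h2 (P.concat h1)).IsCycle := by
  rw [Walk.cons_isCycle_iff]
  constructor
  · rw [Walk.isPath_def, Walk.concat_eq_append, Walk.support_append]
    simp only [Walk.support_cons, Walk.support_nil, List.tail_cons]
    rw [List.nodup_append]
    refine ⟨hP.support_nodup, List.nodup_singleton _, ?_⟩
    intro x hx y hy hxy
    simp only [List.mem_singleton] at hy
    subst hxy; subst hy; exact hv hx
  · rw [Walk.concat_eq_append, Walk.edges_append]
    simp only [Walk.edges_cons, Walk.edges_nil, List.mem_append, List.mem_singleton]
    rintro (he | he)
    · exact hv (Walk.fst_mem_support_of_mem_edges P he)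
    · rw [Sym2.eq_iff] at he
      rcases he with ⟨hva, _⟩ | ⟨_, hab'⟩
      · exact hv (hva ▸ P.end_mem_support)
      · exact hab hab'

private lemma mem_tail_of_closed {u x : V} (c : H.Walk u u) (hc : ¬c.Nil) :
    x ∈ c.support ↔ x ∈ c.support.tail := by
  cases c with
  | nil => simp at hc
  | cons h p =>
    simp only [Walk.support_cons, List.tail_cons, List.mem_cons]
    constructor
    · rintro (rfl | h')
      · exact p.end_mem_support
      · exact h'
    · exact Or.inr

private lemma mem_support_rotate_iff {u w x : V} {c : H.Walk u u} (hc : c.IsCycle)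
    (h : w ∈ c.support) : x ∈ (c.rotate w h).support ↔ x ∈ c.support := by
  rw [mem_tail_of_closed _ (hc.rotate h).not_nil, mem_tail_of_closed _ hc.not_nil]
  exact (Walk.support_rotate c w h).mem_iff

private lemma length_rotate' {u w : V} (c : H.Walk u u) (h : w ∈ c.support) :
    (c.rotate w h).length = c.length := by
  have := congrArg Walk.length (c.take_spec h)
  rw [Walk.length_append] at this
  unfold Walk.rotate
  rw [Walk.length_append]
  omega

private lemma cycle_takeUntil_isPath {w w' : V} (C : H.Walk w w) (hC : C.IsCycle)
    (h : w' ∈ C.support) (hne : w' ≠ w) :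
    (C.takeUntil w' h).IsPath ∧ (C.dropUntil w' h).IsPath := by
  have hspec := C.take_spec h
  have htail : C.support.tail = (C.takeUntil w' h).support.tail ++
      (C.dropUntil w' h).support.tail := by
    conv_lhs => rw [← hspec]
    rw [Walk.tail_support_append]
  have hnd := hC.support_nodup
  rw [htail] at hnd
  have hnd1 := hnd.of_append_left
  have hnd2 := hnd.of_append_right
  have hdisj := List.disjoint_of_nodup_append hnd
  constructor
  · rw [Walk.isPath_def, (C.takeUntil w' h).support_eq_cons]
    refine List.nodup_cons.mpr ⟨?_, hnd1⟩
    intro hmem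
    have hw : w ∈ (C.dropUntil w' h).support.tail := by
      have := (C.dropUntil w' h).end_mem_support
      rw [(C.dropUntil w' h).support_eq_cons] at this
      rcases List.mem_cons.mp this with h' | h'
      · exact absurd h'.symm hne
      · exact h'
    exact hdisj hmem hw
  · rw [Walk.isPath_def, (C.dropUntil w' h).support_eq_cons]
    refine List.nodup_cons.mpr ⟨?_, hnd2⟩
    intro hmem
    have hw : w' ∈ (C.takeUntil w' h).support.tail := by
      have := (C.takeUntil w' h).end_mem_support
      rw [(C.takeUntil w' h).support_eq_cons] at this
      rcases List.mem_cons.mp this with h' | h'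
      · exact absurd h' hne
      · exact h'
    exact (hdisj hw hmem).elim

private lemma length_take_add_drop {u v w' : V} (C : H.Walk u v) (h : w' ∈ C.support) :
    (C.takeUntil w' h).length + (C.dropUntil w' h).length = C.length := by
  have := congrArg Walk.length (C.take_spec h)
  rwa [Walk.length_append] at this

private lemma getVert_length_takeUntil {u v w' : V} (C : H.Walk u v) (h : w' ∈ C.support) :
    C.getVert (C.takeUntil w' h).length = w' := by
  have h2 : ((C.takeUntil w' h).append (C.dropUntil w' h)).getVert
      (C.takeUntil w' h).length = w' := by
    rw [Walk.getVert_append]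
    simp
  rwa [C.take_spec h] at h2

private lemma support_getElem_eq_getVert {u v : V} (p : H.Walk u v) (i : ℕ)
    (hi : i < p.support.length) : p.support[i] = p.getVert i := by
  induction p generalizing i with
  | nil =>
    simp only [Walk.support_nil, List.length_cons, List.length_nil] at hi
    have : i = 0 := by omega
    subst this
    simp
  | cons h p ih =>
    cases i with
    | zero => simp [Walk.getVert_zero]
    | succ n =>
      simp only [Walk.support_cons, List.getElem_cons_succ, Walk.getVert_cons_succ]
      apply ih

private lemma cycle_getVert_inj {w : V} {C : H.Walk w w} (hC : C.IsCycle) {j k : ℕ}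
    (hj1 : 1 ≤ j) (hj2 : j ≤ C.length - 1) (hk1 : 1 ≤ k) (hk2 : k ≤ C.length - 1)
    (h : C.getVert j = C.getVert k) : j = k := by
  have hm := hC.three_le_length
  have hls := C.length_support
  have hts : C.support.tail.length = C.length := by
    rw [List.length_tail, hls]
    omega
  obtain ⟨j', rfl⟩ : ∃ j', j = j' + 1 := ⟨j - 1, by omega⟩
  obtain ⟨k', rfl⟩ : ∃ k', k = k' + 1 := ⟨k - 1, by omega⟩
  have hgj : C.support[j' + 1]'(by omega) = C.getVert (j' + 1) :=
    support_getElem_eq_getVert _ _ (by omega)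
  have hgk : C.support[k' + 1]'(by omega) = C.getVert (k' + 1) :=
    support_getElem_eq_getVert _ _ (by omega)
  have hj' : C.support.tail[j']'(by omega) = C.support[j' + 1]'(by omega) :=
    List.getElem_tail _
  have hk' : C.support.tail[k']'(by omega) = C.support[k' + 1]'(by omega) :=
    List.getElem_tail _
  have hnd := hC.support_nodup
  have heq : C.support.tail[j']'(by omega) = C.support.tail[k']'(by omega) := by
    rw [hj', hk', hgj, hgk, h]
  have := (List.Nodup.getElem_inj_iff hnd).mp heq
  omega

private lemma exists_mid {a b : V} (P : H.Walk a b) (hlen : P.length = 2) :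
    ∃ x, s(a, x) ∈ P.edges ∧ s(x, b) ∈ P.edges := by
  cases P with
  | nil => simp at hlen
  | @cons _ y _ h P =>
    cases P with
    | nil => simp at hlen
    | @cons _ z _ h' P =>
      cases P with
      | nil => exact ⟨y, by simp, by simp⟩
      | cons h'' P => simp [Walk.length_cons] at hlen

private lemma pairArc {w w' v : V} {C : H.Walk w w} (hC : C.IsCycle) (hodd : Odd C.length)
    (hmin : ∀ (x : V) (c : H.Walk x x), c.IsCycle → Odd c.length → C.length ≤ c.length)
    (hv : v ∉ C.support) (h1 : H.Adj v w) (h2 : H.Adj v w') (h : w' ∈ C.support)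
    (hne : w' ≠ w) :
    (C.takeUntil w' h).length = 2 ∨ (C.takeUntil w' h).length = C.length - 2 := by
  have hsum : (C.takeUntil w' h).length + (C.dropUntil w' h).length = C.length :=
    length_take_add_drop C h
  obtain ⟨hpPath, hqPath⟩ := cycle_takeUntil_isPath C hC h hne
  have hp1 : 1 ≤ (C.takeUntil w' h).length := by
    by_contra h'
    exact hne (Walk.eq_of_length_eq_zero (p := C.takeUntil w' h) (by omega)).symm
  have hq1 : 1 ≤ (C.dropUntil w' h).length := by
    by_contra h'
    exact hne (Walk.eq_of_length_eq_zero (p := C.dropUntil w' h) (by omega))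
  have hvp : v ∉ (C.takeUntil w' h).support := fun hx => hv (C.support_takeUntil_subset h hx)
  have hvq : v ∉ (C.dropUntil w' h).support := fun hx => hv (C.support_dropUntil_subset h hx)
  rcases Nat.even_or_odd (C.takeUntil w' h).length with hpe | hpo
  · left
    have hcyc := close_isCycle (C.dropUntil w' h) hqPath hne hvq h1.symm h2
    have hclen : (Walk.cons h2 ((C.dropUntil w' h).concat h1.symm)).length
        = (C.dropUntil w' h).length + 2 := by
      simp [Walk.length_cons, Walk.length_concat]
    have hco : Odd (Walk.cons h2 ((C.dropUntil w' h).concat h1.symm)).length := by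
      rw [hclen]
      rw [Nat.even_iff] at hpe
      rw [Nat.odd_iff] at hodd ⊢
      omega
    have hge := hmin v _ hcyc hco
    rw [hclen] at hge
    rw [Nat.even_iff] at hpe
    omega
  · right
    have hcyc := close_isCycle (C.takeUntil w' h) hpPath (fun he => hne he.symm) hvp h2.symm h1
    have hclen : (Walk.cons h1 ((C.takeUntil w' h).concat h2.symm)).length
        = (C.takeUntil w' h).length + 2 := by
      simp [Walk.length_cons, Walk.length_concat]
    have hco : Odd (Walk.cons h1 ((C.takeUntil w' h).concat h2.symm)).length := by
      rw [hclen]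
      rw [Nat.odd_iff] at hpo ⊢
      omega
    have hge := hmin v _ hcyc hco
    rw [hclen] at hge
    rw [Nat.odd_iff] at hpo hodd
    omega

private lemma dist2 {u v w₁ w₂ : V} {L : H.Walk u u} (hL : L.IsCycle) (hLodd : Odd L.length)
    (hLmin : ∀ (x : V) (c : H.Walk x x), c.IsCycle → Odd c.length → L.length ≤ c.length)
    (hv : v ∉ L.support) (hw₁ : w₁ ∈ L.support) (hw₂ : w₂ ∈ L.support)
    (ha1 : H.Adj v w₁) (ha2 : H.Adj v w₂) (hne : w₁ ≠ w₂) :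
    ∃ x, s(w₁, x) ∈ L.edges ∧ s(x, w₂) ∈ L.edges := by
  have hCc : (L.rotate w₁ hw₁).IsCycle := hL.rotate hw₁
  have hClen : (L.rotate w₁ hw₁).length = L.length := length_rotate' L hw₁
  have hedge : ∀ e, e ∈ (L.rotate w₁ hw₁).edges ↔ e ∈ L.edges :=
    fun e => (Walk.rotate_edges L w₁ hw₁).mem_iff
  have hvC : v ∉ (L.rotate w₁ hw₁).support :=
    fun h => hv ((mem_support_rotate_iff hL hw₁).mp h)
  have hw₂C : w₂ ∈ (L.rotate w₁ hw₁).support := (mem_support_rotate_iff hL hw₁).mpr hw₂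
  have hmin' : ∀ (x : V) (c : H.Walk x x), c.IsCycle → Odd c.length →
      (L.rotate w₁ hw₁).length ≤ c.length := by
    intro x c hc ho
    rw [hClen]
    exact hLmin x c hc ho
  have hCodd : Odd (L.rotate w₁ hw₁).length := by rw [hClen]; exact hLodd
  rcases pairArc hCc hCodd hmin' hvC ha1 ha2 hw₂C hne.symm with h2 | h2
  · obtain ⟨x, hx1, hx2⟩ := exists_mid _ h2
    exact ⟨x, (hedge _).mp (Walk.edges_takeUntil_subset _ _ hx1),
      (hedge _).mp (Walk.edges_takeUntil_subset _ _ hx2)⟩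
  · have hsum := length_take_add_drop (L.rotate w₁ hw₁) hw₂C
    have h3 := hCc.three_le_length
    have hq2 : ((L.rotate w₁ hw₁).dropUntil w₂ hw₂C).length = 2 := by omega
    obtain ⟨x, hx1, hx2⟩ := exists_mid _ hq2
    refine ⟨x, ?_, ?_⟩
    · rw [Sym2.eq_swap]
      exact (hedge _).mp (Walk.edges_dropUntil_subset _ _ hx2)
    · rw [Sym2.eq_swap]
      exact (hedge _).mp (Walk.edges_dropUntil_subset _ _ hx1)

private lemma no_triangle {u v a b : V} {L : H.Walk u u}
    (hLmin : ∀ (x : V) (c : H.Walk x x), c.IsCycle → Odd c.length → L.length ≤ c.length)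
    (hm : 11 < L.length) (hv : v ∉ L.support) (ha : a ∈ L.support) (hb : b ∈ L.support)
    (h1 : H.Adj v a) (h2 : H.Adj v b) : ¬ H.Adj a b := by
  intro hab
  have hva : v ≠ a := fun h => hv (h ▸ ha)
  have hvb : v ≠ b := fun h => hv (h ▸ hb)
  have hcyc : (Walk.cons h1 (Walk.cons hab (Walk.cons h2.symm Walk.nil))).IsCycle := by
    rw [Walk.cons_isCycle_iff]
    constructor
    · rw [Walk.isPath_def]
      simp only [Walk.support_cons, Walk.support_nil]
      simp [hab.ne, hva.symm, hvb.symm]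
    · intro hmem
      simp only [Walk.edges_cons, Walk.edges_nil, List.mem_cons, List.not_mem_nil,
        or_false] at hmem
      rcases hmem with hmem | hmem <;> rw [Sym2.eq_iff] at hmem
      · rcases hmem with ⟨rfl, -⟩ | ⟨rfl, -⟩
        · exact hva rfl
        · exact hvb rfl
      · rcases hmem with ⟨rfl, -⟩ | ⟨-, h2'⟩
        · exact hvb rfl
        · exact hab.ne h2'
  have hle := hLmin v _ hcyc (by simp [Walk.length_cons]; decide)
  simp only [Walk.length_cons, Walk.length_nil] at hle
  omega

private lemma coreAsym {v w₁ w₂ w₃ : V} {C : H.Walk w₁ w₁} (hC : C.IsCycle)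
    (hCodd : Odd C.length)
    (hmin : ∀ (x : V) (c : H.Walk x x), c.IsCycle → Odd c.length → C.length ≤ c.length)
    (hm : 11 < C.length) (hv : v ∉ C.support)
    (hw₂ : w₂ ∈ C.support) (hw₃ : w₃ ∈ C.support)
    (ha1 : H.Adj v w₁) (ha2 : H.Adj v w₂) (ha3 : H.Adj v w₃)
    (h12 : w₁ ≠ w₂) (h13 : w₁ ≠ w₃) (h23 : w₂ ≠ w₃)
    (hi2 : (C.takeUntil w₂ hw₂).length = 2)
    (hi3 : (C.takeUntil w₃ hw₃).length = C.length - 2) : False := by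
  obtain ⟨hp₂, hq₂⟩ := cycle_takeUntil_isPath C hC hw₂ h12.symm
  have hsum2 := length_take_add_drop C hw₂
  have hspec : (C.takeUntil w₂ hw₂).append (C.dropUntil w₂ hw₂) = C := C.take_spec hw₂
  have hw₁w₃ : ¬ H.Adj w₁ w₃ := no_triangle hmin hm hv C.start_mem_support hw₃ ha1 ha3
  have h3p : w₃ ∉ (C.takeUntil w₂ hw₂).support := by
    intro hmem
    rw [Walk.mem_support_iff_exists_getVert] at hmem
    obtain ⟨n, hn, hnle⟩ := hmem
    rw [hi2] at hnle
    interval_cases n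
    · rw [Walk.getVert_zero] at hn
      exact h13 hn
    · have hadj := (C.takeUntil w₂ hw₂).adj_getVert_succ (by omega : 0 < (C.takeUntil w₂ hw₂).length)
      rw [Walk.getVert_zero, hn] at hadj
      exact hw₁w₃ hadj
    · rw [Walk.getVert_of_length_le _ (by omega)] at hn
      exact h23 hn
  have h3q : w₃ ∈ (C.dropUntil w₂ hw₂).support := by
    have hmem : w₃ ∈ ((C.takeUntil w₂ hw₂).append (C.dropUntil w₂ hw₂)).support := by
      rw [hspec]; exact hw₃
    rcases (Walk.mem_support_append_iff _ _).mp hmem with h | h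
    · exact absurd h h3p
    · exact h
  have hsum3 := length_take_add_drop (C.dropUntil w₂ hw₂) h3q
  have hD1 : 1 ≤ ((C.dropUntil w₂ hw₂).dropUntil w₃ h3q).length := by
    by_contra h'
    exact h13 (Walk.eq_of_length_eq_zero
      (p := (C.dropUntil w₂ hw₂).dropUntil w₃ h3q) (by omega)).symm
  have hgM : C.getVert (2 + ((C.dropUntil w₂ hw₂).takeUntil w₃ h3q).length) = w₃ := by
    have h2' : ((C.takeUntil w₂ hw₂).append (C.dropUntil w₂ hw₂)).getVert
        (2 + ((C.dropUntil w₂ hw₂).takeUntil w₃ h3q).length) = w₃ := by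
      rw [Walk.getVert_append, hi2, if_neg (by omega)]
      have hML : 2 + ((C.dropUntil w₂ hw₂).takeUntil w₃ h3q).length - 2
          = ((C.dropUntil w₂ hw₂).takeUntil w₃ h3q).length := by omega
      rw [hML]
      exact getVert_length_takeUntil _ h3q
    rwa [hspec] at h2'
  have hg3 : C.getVert (C.length - 2) = w₃ := by
    have hg := getVert_length_takeUntil C hw₃
    rwa [hi3] at hg
  have h3C := hC.three_le_length
  have heq : 2 + ((C.dropUntil w₂ hw₂).takeUntil w₃ h3q).length = C.length - 2 := by
    apply cycle_getVert_inj hC (by omega) (by omega) (by omega) (by omega)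
      (hgM.trans hg3.symm)
  have hMpath : ((C.dropUntil w₂ hw₂).takeUntil w₃ h3q).IsPath := hq₂.takeUntil h3q
  have hvM : v ∉ ((C.dropUntil w₂ hw₂).takeUntil w₃ h3q).support := fun hmem =>
    hv (C.support_dropUntil_subset hw₂ ((C.dropUntil w₂ hw₂).support_takeUntil_subset h3q hmem))
  have hcyc := close_isCycle _ hMpath h23 hvM ha3.symm ha2
  have hclen : (Walk.cons ha2 (((C.dropUntil w₂ hw₂).takeUntil w₃ h3q).concat ha3.symm)).length
      = ((C.dropUntil w₂ hw₂).takeUntil w₃ h3q).length + 2 := by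
    simp [Walk.length_cons, Walk.length_concat]
  have hodd' : Odd (Walk.cons ha2 (((C.dropUntil w₂ hw₂).takeUntil w₃ h3q).concat ha3.symm)).length := by
    rw [hclen]
    rw [Nat.odd_iff] at hCodd ⊢
    omega
  have hge := hmin v _ hcyc hodd'
  rw [hclen] at hge
  omega

private lemma core {u v w₁ w₂ w₃ : V} {L : H.Walk u u} (hL : L.IsCycle) (hLodd : Odd L.length)
    (hLmin : ∀ (x : V) (c : H.Walk x x), c.IsCycle → Odd c.length → L.length ≤ c.length)
    (hm : 11 < L.length) (hv : v ∉ L.support)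
    (hw₁ : w₁ ∈ L.support) (hw₂ : w₂ ∈ L.support) (hw₃ : w₃ ∈ L.support)
    (ha1 : H.Adj v w₁) (ha2 : H.Adj v w₂) (ha3 : H.Adj v w₃)
    (h12 : w₁ ≠ w₂) (h13 : w₁ ≠ w₃) (h23 : w₂ ≠ w₃) : False := by
  have hCc : (L.rotate w₁ hw₁).IsCycle := hL.rotate hw₁
  have hClen : (L.rotate w₁ hw₁).length = L.length := length_rotate' L hw₁
  have hvC : v ∉ (L.rotate w₁ hw₁).support :=
    fun h => hv ((mem_support_rotate_iff hL hw₁).mp h)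
  have hw₂C : w₂ ∈ (L.rotate w₁ hw₁).support := (mem_support_rotate_iff hL hw₁).mpr hw₂
  have hw₃C : w₃ ∈ (L.rotate w₁ hw₁).support := (mem_support_rotate_iff hL hw₁).mpr hw₃
  have hCodd : Odd (L.rotate w₁ hw₁).length := by rw [hClen]; exact hLodd
  have hmin' : ∀ (x : V) (c : H.Walk x x), c.IsCycle → Odd c.length →
      (L.rotate w₁ hw₁).length ≤ c.length := by
    intro x c hc ho
    rw [hClen]
    exact hLmin x c hc ho
  have hmC : 11 < (L.rotate w₁ hw₁).length := by omega
  rcases pairArc hCc hCodd hmin' hvC ha1 ha2 hw₂C h12.symm with hi2 | hi2 <;>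
    rcases pairArc hCc hCodd hmin' hvC ha1 ha3 hw₃C h13.symm with hi3 | hi3
  · apply h23
    have g2 := getVert_length_takeUntil (L.rotate w₁ hw₁) hw₂C
    rw [hi2] at g2
    have g3 := getVert_length_takeUntil (L.rotate w₁ hw₁) hw₃C
    rw [hi3] at g3
    rw [← g2, ← g3]
  · exact coreAsym hCc hCodd hmin' hmC hvC hw₂C hw₃C ha1 ha2 ha3 h12 h13 h23 hi2 hi3
  · exact coreAsym hCc hCodd hmin' hmC hvC hw₃C hw₂C ha1 ha3 ha2 h13 h12 h23.symm hi3 hi2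
  · apply h23
    have g2 := getVert_length_takeUntil (L.rotate w₁ hw₁) hw₂C
    rw [hi2] at g2
    have g3 := getVert_length_takeUntil (L.rotate w₁ hw₁) hw₃C
    rw [hi3] at g3
    rw [← g2, ← g3]

end Aux

/-- Let `H` be a graph on `n` vertices with no odd cycle of length
`≤ 5n/6 + 1` and let `L` be a shortest odd cycle of `H`. Then every vertex `v` not on `L`
is adjacent to at most 2 vertices of `L`, and if `v` is adjacent to two distinct vertices
`w₁, w₂` of `L`, then `w₁` and `w₂` are at distance exactly 2 along `L` (they have a
common neighbour along the cycle). -/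
theorem stmt15 {V : Type*} [Fintype V] [DecidableEq V]
    (H : SimpleGraph V) [DecidableRel H.Adj]
    (hno : ∀ (x : V) (c : H.Walk x x), c.IsCycle → Odd c.length →
      5 * (Fintype.card V : ℝ) / 6 + 1 < c.length)
    (u : V) (L : H.Walk u u) (hL : L.IsCycle) (hLodd : Odd L.length)
    (hLmin : ∀ (x : V) (c : H.Walk x x), c.IsCycle → Odd c.length → L.length ≤ c.length)
    (v : V) (hv : v ∉ L.support) :
    (L.support.toFinset.filter (fun w => H.Adj v w)).card ≤ 2 ∧
    ∀ w₁ w₂, w₁ ∈ L.support → w₂ ∈ L.support → H.Adj v w₁ → H.Adj v w₂ → w₁ ≠ w₂ →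
      ∃ x, s(w₁, x) ∈ L.edges ∧ s(x, w₂) ∈ L.edges := by
  classical
  have hnodup : (v :: L.support.tail).Nodup :=
    List.nodup_cons.mpr ⟨fun h => hv (List.mem_of_mem_tail h), hL.support_nodup⟩
  have hcard : L.length + 1 ≤ Fintype.card V := by
    have hlc := hnodup.length_le_card
    have hls := L.length_support
    simp only [List.length_cons, List.length_tail] at hlc
    omega
  have hbig := hno u L hL hLodd
  have hm : 11 < L.length := by
    have hcast : (L.length : ℝ) + 1 ≤ (Fintype.card V : ℝ) := by exact_mod_cast hcard
    have h11 : (11 : ℝ) < (L.length : ℝ) := by linarith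
    exact_mod_cast h11
  constructor
  · by_contra hcard3
    push_neg at hcard3
    rw [Finset.two_lt_card_iff] at hcard3
    obtain ⟨a, b, c, ha, hb, hc, hab, hac, hbc⟩ := hcard3
    simp only [Finset.mem_filter, List.mem_toFinset] at ha hb hc
    exact core hL hLodd hLmin hm hv ha.1 hb.1 hc.1 ha.2 hb.2 hc.2 hab hac hbc
  · intro w₁ w₂ hw₁ hw₂ ha1 ha2 hne
    exact dist2 hL hLodd hLmin hv hw₁ hw₂ ha1 ha2 hne
end
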